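/- arXiv:1901.10886 — 15 statements merged into one kernel-verified Lean document; each statement's English description precedes it below -/
import Mathlib

section
/- For all real r with 0 < r ≤ 1 and all real θ, |1 + re^{iθ} + r²e^{2iθ}| / (1 + r + r²) ≤ exp(-(2r/(1+r²))·sin²(θ/2)). -/
/-!
Write `s = sin²(θ/2)` and `u = r s / (1 + r²)`. The squared modulus of `1 + q + q²` is a
quadratic polynomial in `s`, and `|1 + q + q²| / (1 + r + r²) ≤ (1 - u) / (1 + u)` because the
difference of the squared sides (cleared of denominators) factors as `r² s (1 - s)` times a
positive quadratic. Finally `(1 - u) / (1 + u) ≤ exp (-2u)` keeps only the first term of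
`log (1 + u) - log (1 - u) = 2 (u + u³/3 + u⁵/5 + ⋯)`.
-/

open Complex Real

lemma two_mul_le_log_one_add_sub_log_one_sub {u : ℝ} (h0 : 0 ≤ u) (h1 : u < 1) :
    2 * u ≤ Real.log (1 + u) - Real.log (1 - u) := by
  have hsum := hasSum_log_sub_log_of_abs_lt_one (by rwa [abs_of_nonneg h0])
  simpa using le_hasSum hsum 0 fun j _ => by positivity

lemma one_sub_div_one_add_le_exp_neg_two_mul {u : ℝ} (hu : 0 ≤ u) :
    (1 - u) / (1 + u) ≤ Real.exp (-2 * u) := by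
  rcases lt_or_ge u 1 with h1 | h1
  · rw [← Real.exp_log (div_pos (by linarith) (by linarith)), Real.exp_le_exp,
      Real.log_div (by linarith) (by linarith)]
    linarith [two_mul_le_log_one_add_sub_log_one_sub hu h1]
  · exact (div_nonpos_of_nonpos_of_nonneg (by linarith) (by linarith)).trans (Real.exp_pos _).le

lemma norm_one_add_mul_exp_add_sq_mul_exp_sq (r θ : ℝ) :
    ‖1 + (r : ℂ) * Complex.exp (θ * Complex.I) + (r : ℂ) ^ 2 * Complex.exp (2 * θ * Complex.I)‖ ^ 2
      = 1 + r ^ 2 + r ^ 4 + 2 * r * (1 + r ^ 2) * Real.cos θ + 2 * r ^ 2 * Real.cos (2 * θ) := by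
  have h2 : (2 * θ * Complex.I : ℂ) = ((2 * θ : ℝ) : ℂ) * Complex.I := by push_cast; ring
  rw [h2, Complex.sq_norm, Complex.normSq_apply]
  simp only [Complex.add_re, Complex.add_im, Complex.mul_re, Complex.mul_im,
    Complex.exp_ofReal_mul_I_re, Complex.exp_ofReal_mul_I_im, Complex.one_re, Complex.one_im,
    Complex.ofReal_re, Complex.ofReal_im, ← Complex.ofReal_pow]
  rw [Real.cos_two_mul, Real.sin_two_mul]
  linear_combination (r + 2 * r ^ 2 * Real.cos θ) ^ 2 * Real.sin_sq_add_cos_sq θ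

lemma quadratic_mul_sq_le (r s : ℝ) (hr : 0 ≤ r) (hs0 : 0 ≤ s) (hs1 : s ≤ 1) :
    ((1 + r + r ^ 2) ^ 2 - 4 * r * s * (1 + 4 * r + r ^ 2) + 16 * r ^ 2 * s ^ 2)
        * (1 + r ^ 2 + r * s) ^ 2
      ≤ ((1 + r + r ^ 2) * (1 + r ^ 2 - r * s)) ^ 2 := by
  have hfactor : 0 ≤ r ^ 2 * s * (1 - s) * (16 * r ^ 2 * s ^ 2 + 28 * r * s * (1 + r ^ 2)
      + 4 * (1 + r ^ 2) * (2 * (1 + r ^ 2) - r)) := by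
    have : 0 ≤ 2 * (1 + r ^ 2) - r := by nlinarith [sq_nonneg (r - 1)]
    have : 0 ≤ 1 - s := by linarith
    positivity
  linear_combination hfactor

theorem stmt0_general (r θ : ℝ) (hr0 : 0 < r) :
    ‖1 + (r : ℂ) * Complex.exp (θ * Complex.I)
        + (r : ℂ) ^ 2 * Complex.exp (2 * θ * Complex.I)‖ / (1 + r + r ^ 2)
      ≤ Real.exp (-(2 * r / (1 + r ^ 2)) * Real.sin (θ / 2) ^ 2) := by
  set s := Real.sin (θ / 2) ^ 2
  have hcos : Real.cos θ = 1 - 2 * s := by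
    have h := Real.sin_sq_eq_half_sub (θ / 2)
    rw [mul_div_cancel₀ θ two_ne_zero] at h
    linarith
  have hnorm : ‖1 + (r : ℂ) * Complex.exp (θ * Complex.I)
        + (r : ℂ) ^ 2 * Complex.exp (2 * θ * Complex.I)‖ ^ 2
      = (1 + r + r ^ 2) ^ 2 - 4 * r * s * (1 + 4 * r + r ^ 2) + 16 * r ^ 2 * s ^ 2 := by
    rw [norm_one_add_mul_exp_add_sq_mul_exp_sq, Real.cos_two_mul, hcos]
    ring
  have hs1 : s ≤ 1 := Real.sin_sq_le_one _
  have hrs : r * s ≤ r := mul_le_of_le_one_right hr0.le hs1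
  have hsq := quadratic_mul_sq_le r s hr0.le (sq_nonneg _) hs1
  rw [← hnorm, ← mul_pow, pow_le_pow_iff_left₀ (by positivity) (by nlinarith) two_ne_zero] at hsq
  calc _ ≤ (1 + r ^ 2 - r * s) / (1 + r ^ 2 + r * s) := by
        rw [div_le_div_iff₀ (by positivity) (by positivity)]
        linarith
    _ = (1 - r * s / (1 + r ^ 2)) / (1 + r * s / (1 + r ^ 2)) := by
        field_simp
    _ ≤ Real.exp (-2 * (r * s / (1 + r ^ 2))) :=
        one_sub_div_one_add_le_exp_neg_two_mul (by positivity)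
    _ = _ := by ring_nf

theorem stmt0 (r θ : ℝ) (hr0 : 0 < r) (hr1 : r ≤ 1) :
    ‖1 + (r : ℂ) * Complex.exp (θ * Complex.I)
        + (r : ℂ) ^ 2 * Complex.exp (2 * θ * Complex.I)‖ / (1 + r + r ^ 2)
      ≤ Real.exp (-(2 * r / (1 + r ^ 2)) * Real.sin (θ / 2) ^ 2) :=
  stmt0_general r θ hr0
end

section
/- Let 0 < a ≤ b and 0 < c ≤ π/b be real numbers. Then for all complex z with (Im z)² ≤ (Re z)² + c², one has |sinh(az)/sinh(bz)| ≤ sin(ac)/sin(bc). -/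
/-!
Both sides are limits of Euler's partial products
`sinh w = w ∏ (1 + w²/(πk)²)` and `sin x = x ∏ (1 - x²/(πk)²)`, so it suffices to compare them
factor by factor. With `d = (πk)² ≥ π² ≥ (bc)²` and `Re z² = (Re z)² - (Im z)² ≥ -c²`, the factor
inequality `|d + a²z²| (d - b²c²) ≤ (d - a²c²) |d + b²z²|` holds because both the real and the
imaginary part of the left-hand product are dominated in absolute value by those on the right.
-/

open Complex Real Filter Finset Topology

noncomputable def sinPartialProd (x : ℝ) (n : ℕ) : ℝ :=
  x * ∏ j ∈ range n, (1 - x ^ 2 / (π * (j + 1)) ^ 2)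

noncomputable def sinhPartialProd (w : ℂ) (n : ℕ) : ℂ :=
  w * ∏ j ∈ range n, (1 + w ^ 2 / ((π * (j + 1)) ^ 2 : ℝ))

theorem tendsto_sinPartialProd (x : ℝ) : Tendsto (sinPartialProd x) atTop (𝓝 (Real.sin x)) := by
  have h := Real.tendsto_euler_sin_prod (x / π)
  rw [mul_div_cancel₀ x pi_ne_zero] at h
  convert h using 2 with n
  simp only [sinPartialProd, div_pow, mul_pow, div_div]

theorem Complex.tendsto_sin_partial_prod (w : ℂ) :
    Tendsto (fun n ↦ w * ∏ j ∈ range n, (1 - w ^ 2 / ((π * (j + 1)) ^ 2 : ℝ))) atTop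
      (𝓝 (Complex.sin w)) := by
  have hπ : (π : ℂ) ≠ 0 := ofReal_ne_zero.mpr pi_ne_zero
  have h := Complex.tendsto_euler_sin_prod (w / π)
  rw [mul_div_cancel₀ w hπ] at h
  convert h using 2 with n
  push_cast
  simp only [div_pow, mul_pow, div_div]

theorem tendsto_sinhPartialProd (w : ℂ) :
    Tendsto (sinhPartialProd w) atTop (𝓝 (Complex.sinh w)) := by
  have h := (Complex.tendsto_sin_partial_prod (w * I)).mul_const I⁻¹
  rw [sin_mul_I, mul_inv_cancel_right₀ I_ne_zero] at h
  convert h using 2 with n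
  simp only [sinhPartialProd, mul_pow, I_sq, mul_neg_one, neg_div, sub_neg_eq_add]
  rw [mul_right_comm, mul_inv_cancel_right₀ I_ne_zero]

theorem Complex.norm_le_norm_of_abs_re_le_of_abs_im_le {x y : ℂ} (hre : |x.re| ≤ |y.re|)
    (him : |x.im| ≤ |y.im|) : ‖x‖ ≤ ‖y‖ := by
  rw [norm_eq_sqrt_sq_add_sq, norm_eq_sqrt_sq_add_sq]
  exact Real.sqrt_le_sqrt (add_le_add (sq_le_sq.mpr hre) (sq_le_sq.mpr him))

theorem norm_add_mul_mul_sub_le {s t c d : ℝ} {w : ℂ} (hs : 0 ≤ s) (hst : s ≤ t)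
    (hd : t * c ^ 2 ≤ d) (hw : -c ^ 2 ≤ w.re) :
    ‖(d : ℂ) + s * w‖ * (d - t * c ^ 2) ≤ (d - s * c ^ 2) * ‖(d : ℂ) + t * w‖ := by
  have ht : 0 ≤ t := hs.trans hst
  have hd0 : 0 ≤ d := (mul_nonneg ht (sq_nonneg c)).trans hd
  have htc : 0 ≤ d - t * c ^ 2 := sub_nonneg.mpr hd
  have hsc : d - t * c ^ 2 ≤ d - s * c ^ 2 := by gcongr
  rw [← Real.norm_of_nonneg htc, ← Real.norm_of_nonneg (htc.trans hsc), ← norm_real,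
    ← norm_real, ← norm_mul, ← norm_mul]
  apply Complex.norm_le_norm_of_abs_re_le_of_abs_im_le
  · have hX : (((d : ℂ) + s * w) * ((d - t * c ^ 2 : ℝ) : ℂ)).re
        = (d + s * w.re) * (d - t * c ^ 2) := by
      simp only [re_mul_ofReal, add_re, ofReal_re, re_ofReal_mul]
    have hY : (((d - s * c ^ 2 : ℝ) : ℂ) * ((d : ℂ) + t * w)).re
        = (d - s * c ^ 2) * (d + t * w.re) := by
      simp only [re_ofReal_mul, add_re, ofReal_re]
    have hsw : 0 ≤ d + s * w.re := by nlinarith [mul_le_mul_of_nonneg_left hw hs]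
    have htw : 0 ≤ d + t * w.re := by nlinarith [mul_le_mul_of_nonneg_left hw ht]
    -- the difference of the two sides is `d (t - s) (Re w + c²)`
    rw [hX, hY, abs_of_nonneg (mul_nonneg hsw htc), abs_of_nonneg (mul_nonneg (htc.trans hsc) htw)]
    nlinarith [mul_nonneg (mul_nonneg hd0 (sub_nonneg.mpr hst)) (neg_le_iff_add_nonneg.mp hw)]
  · have hX : (((d : ℂ) + s * w) * ((d - t * c ^ 2 : ℝ) : ℂ)).im
        = w.im * (s * (d - t * c ^ 2)) := by
      simp only [im_mul_ofReal, im_ofReal_mul, add_im, ofReal_im, zero_add]; ring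
    have hY : (((d - s * c ^ 2 : ℝ) : ℂ) * ((d : ℂ) + t * w)).im
        = w.im * (t * (d - s * c ^ 2)) := by
      simp only [im_ofReal_mul, add_im, ofReal_im, zero_add]; ring
    rw [hX, hY, abs_mul w.im, abs_mul w.im, abs_of_nonneg (mul_nonneg hs htc),
      abs_of_nonneg (mul_nonneg ht (htc.trans hsc))]
    gcongr

theorem norm_one_add_div_mul_le {a b c d : ℝ} {z : ℂ} (hab : a ^ 2 ≤ b ^ 2) (hd0 : 0 < d)
    (hd : (b * c) ^ 2 ≤ d) (hz : -c ^ 2 ≤ (z ^ 2).re) :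
    ‖1 + (a * z) ^ 2 / (d : ℂ)‖ * (1 - (b * c) ^ 2 / d)
      ≤ (1 - (a * c) ^ 2 / d) * ‖1 + (b * z) ^ 2 / (d : ℂ)‖ := by
  have key := norm_add_mul_mul_sub_le (d := d) (sq_nonneg a) hab (by rwa [mul_pow] at hd) hz
  have hcomplex (x : ℝ) : 1 + (x * z) ^ 2 / (d : ℂ) = ((d : ℂ) + (x ^ 2 : ℝ) * z ^ 2) / d := by
    have : (d : ℂ) ≠ 0 := ofReal_ne_zero.mpr hd0.ne'
    field_simp
    push_cast
    ring
  have hreal (x : ℝ) : 1 - (x * c) ^ 2 / d = (d - x ^ 2 * c ^ 2) / d := by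
    field_simp
  rw [hcomplex, hcomplex, hreal, hreal, norm_div, norm_div, norm_real, Real.norm_of_nonneg hd0.le,
    div_mul_div_comm, div_mul_div_comm, mul_comm d d]
  exact div_le_div_of_nonneg_right key (by positivity)

theorem norm_sinhPartialProd_mul_sinPartialProd_le {a b c : ℝ} {z : ℂ} (ha : 0 ≤ a) (hab : a ≤ b)
    (hc : 0 ≤ c) (hbc : b * c ≤ π) (hz : -c ^ 2 ≤ (z ^ 2).re) (n : ℕ) :
    ‖sinhPartialProd (a * z) n‖ * sinPartialProd (b * c) n
      ≤ sinPartialProd (a * c) n * ‖sinhPartialProd (b * z) n‖ := by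
  have hd0 (j : ℕ) : 0 < (π * (j + 1)) ^ 2 := by positivity
  have hd (j : ℕ) : (b * c) ^ 2 ≤ (π * (j + 1)) ^ 2 := by
    have : π ≤ π * (j + 1) := le_mul_of_one_le_right pi_pos.le (by simp)
    exact pow_le_pow_left₀ (mul_nonneg (ha.trans hab) hc) (hbc.trans this) 2
  have hlead : ‖(a : ℂ) * z‖ * (b * c) = a * c * ‖(b : ℂ) * z‖ := by
    simp only [norm_mul, norm_real, Real.norm_of_nonneg ha, Real.norm_of_nonneg (ha.trans hab)]
    ring
  simp only [sinhPartialProd, sinPartialProd, norm_mul (_ * _) (∏ _ ∈ _, _), norm_prod]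
  rw [mul_mul_mul_comm, mul_mul_mul_comm (a * c), ← prod_mul_distrib, ← prod_mul_distrib, hlead]
  refine mul_le_mul_of_nonneg_left (prod_le_prod (fun j _ ↦ ?_) (fun j _ ↦ ?_)) (by positivity)
  · exact mul_nonneg (norm_nonneg _) (sub_nonneg.mpr (div_le_one_of_le₀ (hd j) (hd0 j).le))
  · exact norm_one_add_div_mul_le (pow_le_pow_left₀ ha hab 2) (hd0 j) (hd j) hz

theorem stmt1 (a b c : ℝ) (ha : 0 < a) (hab : a ≤ b) (hc : 0 < c) (hcb : c ≤ Real.pi / b)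
    (z : ℂ) (hz : z.im ^ 2 ≤ z.re ^ 2 + c ^ 2) :
    ‖Complex.sinh ((a : ℂ) * z)‖ * Real.sin (b * c)
      ≤ Real.sin (a * c) * ‖Complex.sinh ((b : ℂ) * z)‖ := by
  have hbc : b * c ≤ π := (le_div_iff₀' (ha.trans_le hab)).mp hcb
  have hz' : -c ^ 2 ≤ (z ^ 2).re := by
    rw [pow_two z, mul_re]
    nlinarith
  exact le_of_tendsto_of_tendsto'
    ((tendsto_sinhPartialProd _).norm.mul (tendsto_sinPartialProd _))
    ((tendsto_sinPartialProd _).mul (tendsto_sinhPartialProd _).norm)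
    (norm_sinhPartialProd_mul_sinPartialProd_le ha.le hab hc.le hbc hz')
end

section
/- For all real r with 0 ≤ r ≤ 1 and all real θ, |1 + re^{iθ} + r²e^{2iθ}|² ≤ ((1 - rs + r²)/(1 + rs + r²))² · (1 + r + r²)², where s = sin²(θ/2). -/
/-!
Factoring `e^{iθ}` out of `1 + q + q²` for `q = r e^{iθ}` leaves `r + (1 + r²) cos θ + i (r² - 1) sin θ`,
so with `s = sin²(θ/2)` one gets `|1 + q + q²|² = (1 + r + r² - 4rs)² + 4rs(1 - r)²`.
After clearing denominators the gap in the inequality factors as `4r²s(1 - s)` times a quadratic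
in `s` that is a nonnegative combination of `(1 - s)²`, `s` and `1 - s` on `[0, 1]`.
-/

open Complex Real

theorem cos_eq_one_sub_two_mul_sin_half_sq (θ : ℝ) :
    Real.cos θ = 1 - 2 * Real.sin (θ / 2) ^ 2 := by
  rw [← Real.cos_two_mul_eq_one_sub, mul_div_cancel₀ θ two_ne_zero]

theorem sq_norm_one_add_mul_exp_add_sq_mul_exp (r θ : ℝ) :
    ‖1 + (r : ℂ) * Complex.exp (θ * Complex.I) + (r : ℂ) ^ 2 * Complex.exp (2 * θ * Complex.I)‖ ^ 2
      = (1 + r + r ^ 2 - 4 * r * Real.sin (θ / 2) ^ 2) ^ 2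
        + 4 * r * Real.sin (θ / 2) ^ 2 * (1 - r) ^ 2 := by
  have hparts :
      1 + (r : ℂ) * Complex.exp (θ * Complex.I) + (r : ℂ) ^ 2 * Complex.exp (2 * θ * Complex.I)
        = ((1 + r * Real.cos θ + r ^ 2 * Real.cos (2 * θ) : ℝ) : ℂ)
          + ((r * Real.sin θ + r ^ 2 * Real.sin (2 * θ) : ℝ) : ℂ) * Complex.I := by
    rw [← Complex.ofReal_ofNat, ← Complex.ofReal_mul, Complex.exp_mul_I, Complex.exp_mul_I]
    push_cast
    ring
  have hcos := cos_eq_one_sub_two_mul_sin_half_sq θ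
  have hsin : Real.sin θ ^ 2 = 4 * Real.sin (θ / 2) ^ 2 * (1 - Real.sin (θ / 2) ^ 2) := by
    rw [Real.sin_sq, hcos]
    ring
  rw [hparts, Complex.sq_norm, Complex.normSq_add_mul_I, Real.cos_two_mul, Real.sin_two_mul, hcos]
  linear_combination (r + 2 * r ^ 2 * (1 - 2 * Real.sin (θ / 2) ^ 2)) ^ 2 * hsin

theorem one_add_mul_add_sq_pos {r s : ℝ} (hs0 : 0 ≤ s) (hs1 : s ≤ 1) :
    0 < 1 + r * s + r ^ 2 := by
  nlinarith [sq_nonneg (r + s / 2), mul_nonneg hs0 (sub_nonneg.2 hs1)]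

theorem sq_sub_add_mul_sq_le_div_sq_mul_sq {r s : ℝ} (hs0 : 0 ≤ s) (hs1 : s ≤ 1) :
    (1 + r + r ^ 2 - 4 * r * s) ^ 2 + 4 * r * s * (1 - r) ^ 2
      ≤ ((1 - r * s + r ^ 2) / (1 + r * s + r ^ 2)) ^ 2 * (1 + r + r ^ 2) ^ 2 := by
  have hs1' : 0 ≤ 1 - s := sub_nonneg.2 hs1
  have hquartic : 0 ≤ 2 * r ^ 4 - r ^ 3 - r + 2 := by
    nlinarith [sq_nonneg (r ^ 2 - 1), sq_nonneg (r - 1), sq_nonneg r, sq_nonneg (r ^ 2 - r)]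
  have hquadratic : 0 ≤ 4 * r ^ 2 * (1 - s) ^ 2 + 2 * s * (1 + r + r ^ 2) * (1 + r) ^ 2
      + (1 - s) * (2 * r ^ 4 - r ^ 3 - r + 2) := by
    have : 0 ≤ 1 + r + r ^ 2 := by nlinarith [sq_nonneg (r + 1 / 2)]
    positivity
  rw [div_pow, div_mul_eq_mul_div, le_div_iff₀ (pow_pos (one_add_mul_add_sq_pos hs0 hs1) 2),
    ← sub_nonneg]
  have hgap : (1 - r * s + r ^ 2) ^ 2 * (1 + r + r ^ 2) ^ 2
      - ((1 + r + r ^ 2 - 4 * r * s) ^ 2 + 4 * r * s * (1 - r) ^ 2) * (1 + r * s + r ^ 2) ^ 2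
      = 4 * r ^ 2 * s * (1 - s) * (4 * r ^ 2 * (1 - s) ^ 2 + 2 * s * (1 + r + r ^ 2) * (1 + r) ^ 2
          + (1 - s) * (2 * r ^ 4 - r ^ 3 - r + 2)) := by
    ring
  rw [hgap]
  positivity

theorem stmt2_general (r θ : ℝ) :
    ‖1 + (r : ℂ) * Complex.exp (θ * Complex.I)
        + (r : ℂ) ^ 2 * Complex.exp (2 * θ * Complex.I)‖ ^ 2
      ≤ ((1 - r * Real.sin (θ / 2) ^ 2 + r ^ 2) / (1 + r * Real.sin (θ / 2) ^ 2 + r ^ 2)) ^ 2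
          * (1 + r + r ^ 2) ^ 2 := by
  rw [sq_norm_one_add_mul_exp_add_sq_mul_exp]
  exact sq_sub_add_mul_sq_le_div_sq_mul_sq (sq_nonneg _) (Real.sin_sq_le_one _)

theorem stmt2 (r θ : ℝ) (hr0 : 0 ≤ r) (hr1 : r ≤ 1) :
    ‖1 + (r : ℂ) * Complex.exp (θ * Complex.I)
        + (r : ℂ) ^ 2 * Complex.exp (2 * θ * Complex.I)‖ ^ 2
      ≤ ((1 - r * Real.sin (θ / 2) ^ 2 + r ^ 2) / (1 + r * Real.sin (θ / 2) ^ 2 + r ^ 2)) ^ 2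
          * (1 + r + r ^ 2) ^ 2 :=
  stmt2_general r θ
end

section
/- For all n ∈ ℤ⁺ and all real r with 0 < r ≤ 1, 3r² · (Σ_{k=1}^{n} k² r^k) ≥ (Σ_{k=1}^{n} r^k)³. -/
/-!
Induction on `n`. Passing from `n` to `n + 1` adds `x = r ^ (n + 1)` to `S = ∑ r ^ k`, which
raises `S ^ 3` by at most `3 (S + x) ^ 2 x`; since `S + x ≤ (n + 1) r` for `r ≤ 1`, this is at most
`3 r ^ 2 (n + 1) ^ 2 x`, exactly the increase of the left-hand side.
-/

open Finset

lemma sum_Icc_pow_le_mul {r : ℝ} (hr0 : 0 ≤ r) (hr1 : r ≤ 1) (m : ℕ) :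
    ∑ k ∈ Icc 1 m, r ^ k ≤ m * r := by
  have hle : ∀ k ∈ Icc 1 m, r ^ k ≤ r := fun k hk =>
    pow_le_of_le_one hr0 hr1 (by simp at hk; omega)
  simpa using sum_le_card_nsmul _ _ _ hle

lemma add_pow_three_le {s x c : ℝ} (hs : 0 ≤ s) (hx : 0 ≤ x) (h : (s + x) ^ 2 ≤ c) :
    (s + x) ^ 3 ≤ s ^ 3 + 3 * c * x := by
  have hcube : (s + x) ^ 3 - s ^ 3 ≤ 3 * (s + x) ^ 2 * x := by
    nlinarith [mul_nonneg (mul_nonneg hs hx) hx, pow_nonneg hx 3]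
  nlinarith [mul_le_mul_of_nonneg_right h hx]

theorem stmt4_general (n : ℕ) (r : ℝ) (hr0 : 0 < r) (hr1 : r ≤ 1) :
    3 * r ^ 2 * (∑ k ∈ Finset.Icc 1 n, (k : ℝ) ^ 2 * r ^ k)
      ≥ (∑ k ∈ Finset.Icc 1 n, r ^ k) ^ 3 := by
  induction n with
  | zero => simp
  | succ n ih =>
    rw [sum_Icc_succ_top (by omega), sum_Icc_succ_top (by omega)]
    have hbound : (∑ k ∈ Icc 1 n, r ^ k + r ^ (n + 1)) ^ 2 ≤ ((n + 1 : ℕ) * r) ^ 2 := by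
      rw [← sum_Icc_succ_top (by omega)]
      exact pow_le_pow_left₀ (sum_nonneg fun k _ => by positivity)
        (sum_Icc_pow_le_mul hr0.le hr1 _) 2
    have hstep := add_pow_three_le (sum_nonneg fun k _ => by positivity)
      (pow_pos hr0 (n + 1)).le hbound
    calc (∑ k ∈ Icc 1 n, r ^ k + r ^ (n + 1)) ^ 3
        ≤ (∑ k ∈ Icc 1 n, r ^ k) ^ 3 + 3 * ((n + 1 : ℕ) * r) ^ 2 * r ^ (n + 1) := hstep
      _ ≤ 3 * r ^ 2 * (∑ k ∈ Icc 1 n, (k : ℝ) ^ 2 * r ^ k + ((n + 1 : ℕ) : ℝ) ^ 2 * r ^ (n + 1)) := by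
        linarith [ih]

theorem stmt4 (n : ℕ) (hn : 1 ≤ n) (r : ℝ) (hr0 : 0 < r) (hr1 : r ≤ 1) :
    3 * r ^ 2 * (∑ k ∈ Finset.Icc 1 n, (k : ℝ) ^ 2 * r ^ k)
      ≥ (∑ k ∈ Finset.Icc 1 n, r ^ k) ^ 3 :=
  stmt4_general n r hr0 hr1
end

section
/- For all n ∈ ℤ⁺ and all real r with 0 < r ≤ 1, (r+1)·(Σ_{k=1}^{n} r^k)³ ≥ r² · (Σ_{k=1}^{n} k² r^k). -/
/-!
Write `S = ∑ rᵏ`, `T = ∑ k rᵏ`, `A = ∑ k² rᵏ` over `1 ≤ k ≤ n`. Multiplying power sums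
convolves their coefficients, and truncating the product `(∑ aᵢ rⁱ)(∑ bⱼ rʲ)` to total degree
at most `n + 1` only drops nonnegative terms. With `a = b = 1` this gives `r T ≤ S²`; with
`a = k`, `b = 1` and `k² = binom(k+1, 2) + binom(k, 2)` it gives `r A ≤ (1 + r) T S`. Hence
`r² A ≤ r (1 + r) T S ≤ (1 + r) S³`.
-/

open Finset

theorem sum_Icc_one_eq_sum_range {M : Type*} [AddCommMonoid M] (f : ℕ → M) (n : ℕ) :
    ∑ k ∈ Icc 1 n, f k = ∑ i ∈ range n, f (i + 1) := by
  induction n with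
  | zero => simp
  | succ n ih => rw [sum_Icc_succ_top (by omega), ih, sum_range_succ]

theorem sum_range_sum_antidiagonal_le_mul {R : Type*} [Semiring R] [PartialOrder R]
    [IsOrderedRing R] (f g : ℕ → R) (hf : ∀ i, 0 ≤ f i) (hg : ∀ j, 0 ≤ g j) (n : ℕ) :
    ∑ m ∈ range n, ∑ p ∈ antidiagonal m, f p.1 * g p.2
      ≤ (∑ i ∈ range n, f i) * ∑ j ∈ range n, g j := by
  set triangle := {p ∈ range n ×ˢ range n | p.1 + p.2 < n}
  have fiber : ∀ m ∈ range n, antidiagonal m = {p ∈ triangle | p.1 + p.2 = m} := by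
    intro m hm
    ext p
    simp only [mem_range, HasAntidiagonal.mem_antidiagonal, mem_filter, triangle,
      mem_product] at hm ⊢
    omega
  rw [sum_congr rfl fun m hm => by rw [fiber m hm],
    sum_fiberwise_of_maps_to (fun p hp => mem_range.2 (mem_filter.1 hp).2), sum_mul_sum,
    ← sum_product']
  exact sum_le_sum_of_subset_of_nonneg (filter_subset _ _)
    fun p _ _ => mul_nonneg (hf p.1) (hg p.2)

theorem sum_range_convolution_mul_pow_le {R : Type*} [CommSemiring R] [PartialOrder R]
    [IsOrderedRing R] (a b : ℕ → R) (ha : ∀ i, 0 ≤ a i) (hb : ∀ j, 0 ≤ b j) {r : R} (hr : 0 ≤ r)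
    (n : ℕ) :
    ∑ m ∈ range n, (∑ p ∈ antidiagonal m, a p.1 * b p.2) * r ^ (m + 2)
      ≤ (∑ i ∈ range n, a i * r ^ (i + 1)) * ∑ j ∈ range n, b j * r ^ (j + 1) := by
  refine le_of_eq_of_le ?_ (sum_range_sum_antidiagonal_le_mul _ _
    (fun i => mul_nonneg (ha i) (pow_nonneg hr _)) (fun j => mul_nonneg (hb j) (pow_nonneg hr _))
    n)
  refine sum_congr rfl fun m _ => ?_
  rw [sum_mul]
  refine sum_congr rfl fun p hp => ?_
  rw [HasAntidiagonal.mem_antidiagonal] at hp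
  subst hp
  ring

theorem sum_antidiagonal_fst_add_one (m : ℕ) :
    ∑ p ∈ antidiagonal m, ((p.1 : ℝ) + 1) = (m + 1) * (m + 2) / 2 := by
  rw [Nat.sum_antidiagonal_eq_sum_range_succ (fun i _ => (i : ℝ) + 1)]
  induction m with
  | zero => norm_num
  | succ m ih => rw [sum_range_succ, ih]; push_cast; ring

section

variable {r : ℝ} (hr : 0 ≤ r) (n : ℕ)
include hr

theorem mul_sum_range_mul_pow_le_sq :
    r * ∑ i ∈ range n, ((i : ℝ) + 1) * r ^ (i + 1) ≤ (∑ i ∈ range n, r ^ (i + 1)) ^ 2 := by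
  have h := sum_range_convolution_mul_pow_le 1 1 (fun _ => zero_le_one) (fun _ => zero_le_one) hr n
  simp only [Pi.one_apply, mul_one, one_mul, sum_const, Nat.card_antidiagonal, nsmul_eq_mul] at h
  rw [sq, mul_sum]
  refine le_of_eq_of_le (sum_congr rfl fun m _ => ?_) h
  push_cast
  ring

theorem mul_sum_range_sq_mul_pow_le :
    r * ∑ i ∈ range n, ((i : ℝ) + 1) ^ 2 * r ^ (i + 1)
      ≤ (1 + r) * ((∑ i ∈ range n, ((i : ℝ) + 1) * r ^ (i + 1)) * ∑ i ∈ range n, r ^ (i + 1)) := by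
  set B := ∑ m ∈ range n, ((m : ℝ) + 1) * (m + 2) / 2 * r ^ (m + 2)
  have hB : B ≤ (∑ i ∈ range n, ((i : ℝ) + 1) * r ^ (i + 1)) * ∑ i ∈ range n, r ^ (i + 1) := by
    simpa only [Pi.one_apply, mul_one, one_mul, sum_antidiagonal_fst_add_one] using
      sum_range_convolution_mul_pow_le (fun i => (i : ℝ) + 1) 1 (fun _ => by positivity)
        (fun _ => zero_le_one) hr n
  have split : r * ∑ i ∈ range n, ((i : ℝ) + 1) ^ 2 * r ^ (i + 1)
      = B + ∑ m ∈ range n, (m : ℝ) * (m + 1) / 2 * r ^ (m + 2) := by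
    rw [mul_sum, ← sum_add_distrib]
    refine sum_congr rfl fun m _ => ?_
    ring
  have shift : ∑ m ∈ range n, (m : ℝ) * (m + 1) / 2 * r ^ (m + 2) ≤ r * B := calc
    _ ≤ ∑ m ∈ range (n + 1), (m : ℝ) * (m + 1) / 2 * r ^ (m + 2) :=
      sum_le_sum_of_subset_of_nonneg (range_subset_range.2 n.le_succ)
        fun m _ _ => by positivity
    _ = r * B := by
      -- the `m = 0` term vanishes, so shifting `m ↦ m + 1` costs exactly one factor of `r`
      rw [sum_range_succ', mul_sum]
      simp only [CharP.cast_eq_zero, zero_mul, zero_div, add_zero]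
      refine sum_congr rfl fun m _ => ?_
      push_cast
      ring
  calc _ = B + ∑ m ∈ range n, (m : ℝ) * (m + 1) / 2 * r ^ (m + 2) := split
    _ ≤ B + r * B := by gcongr
    _ = (1 + r) * B := by ring
    _ ≤ _ := mul_le_mul_of_nonneg_left hB (by positivity)

end

theorem stmt5_general (n : ℕ) (r : ℝ) (hr0 : 0 < r) :
    (r + 1) * (∑ k ∈ Finset.Icc 1 n, r ^ k) ^ 3
      ≥ r ^ 2 * (∑ k ∈ Finset.Icc 1 n, (k : ℝ) ^ 2 * r ^ k) := by
  simp only [sum_Icc_one_eq_sum_range, Nat.cast_add, Nat.cast_one]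
  set S := ∑ i ∈ range n, r ^ (i + 1)
  set T := ∑ i ∈ range n, ((i : ℝ) + 1) * r ^ (i + 1)
  calc r ^ 2 * ∑ i ∈ range n, ((i : ℝ) + 1) ^ 2 * r ^ (i + 1)
      = r * (r * ∑ i ∈ range n, ((i : ℝ) + 1) ^ 2 * r ^ (i + 1)) := by ring
    _ ≤ r * ((1 + r) * (T * S)) :=
        mul_le_mul_of_nonneg_left (mul_sum_range_sq_mul_pow_le hr0.le n) hr0.le
    _ = (r + 1) * S * (r * T) := by ring
    _ ≤ (r + 1) * S * S ^ 2 :=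
        mul_le_mul_of_nonneg_left (mul_sum_range_mul_pow_le_sq hr0.le n) (by positivity)
    _ = (r + 1) * S ^ 3 := by ring

theorem stmt5 (n : ℕ) (hn : 1 ≤ n) (r : ℝ) (hr0 : 0 < r) (hr1 : r ≤ 1) :
    (r + 1) * (∑ k ∈ Finset.Icc 1 n, r ^ k) ^ 3
      ≥ r ^ 2 * (∑ k ∈ Finset.Icc 1 n, (k : ℝ) ^ 2 * r ^ k) :=
  stmt5_general n r hr0
end

section
/- For all n ∈ ℤ⁺ and all real r with 0 < r ≤ 1, (r² + 4r + 1)·(Σ_{k=1}^{n} r^k)·(Σ_{k=1}^{n} k² r^k) ≥ r(r+1)·(Σ_{k=1}^{n} k³ r^k). -/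
/-!
Writing `A = ∑ r^j`, `B = ∑ k² r^k`, `C = ∑ k³ r^k` (over `1 ≤ j, k ≤ n`), the part `T` of the product
`A B` coming from the triangle `j + k ≤ n + 1` satisfies the exact identity
`6 (1 + 4r + r²) T = 6 r (r + 1) C + n(n+1)(4n+5) r^(n+2) + n(n+1)(2n+1) r^(n+3)`,
a finite form of `(1 + 4r + r²) · r(1+r)/(1-r)³ · r/(1-r) = r(1+r) · r(1+4r+r²)/(1-r)⁴`.
For `r ≥ 0` the two correction terms are nonnegative and `T ≤ A B`.
-/

open Finset

variable {R : Type*}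

lemma six_mul_sum_Icc_sq [CommSemiring R] (n : ℕ) :
    6 * ∑ k ∈ Icc 1 n, (k : R) ^ 2 = n * (n + 1) * (2 * n + 1) := by
  induction n with
  | zero => simp
  | succ n ih =>
    rw [sum_Icc_succ_top (by omega), mul_add, ih]
    push_cast
    ring

/-- The terms `k² r^(j + k)` of `(∑ r^j) (∑ k² r^k)` with `j, k ≥ 1` and `j + k ≤ n + 1`. -/
def triangleSum [CommSemiring R] (r : R) (n : ℕ) : R :=
  ∑ k ∈ Icc 1 n, (k : R) ^ 2 * r ^ k * ∑ j ∈ Icc 1 (n + 1 - k), r ^ j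

lemma triangleSum_succ [CommSemiring R] (r : R) (n : ℕ) :
    triangleSum r (n + 1) = triangleSum r n + (∑ k ∈ Icc 1 (n + 1), (k : R) ^ 2) * r ^ (n + 2) := by
  have term_succ (k : ℕ) (hk : k ∈ Icc 1 n) :
      (k : R) ^ 2 * r ^ k * ∑ j ∈ Icc 1 (n + 1 + 1 - k), r ^ j
        = (k : R) ^ 2 * r ^ k * ∑ j ∈ Icc 1 (n + 1 - k), r ^ j + (k : R) ^ 2 * r ^ (n + 2) := by
    rw [mem_Icc] at hk
    rw [show n + 1 + 1 - k = n + 1 - k + 1 by omega, sum_Icc_succ_top (by omega), mul_add,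
      mul_assoc _ (r ^ k) (r ^ _), ← pow_add, show k + (n + 1 - k + 1) = n + 2 by omega]
  rw [triangleSum, triangleSum, sum_Icc_succ_top (by omega), sum_congr rfl term_succ, sum_add_distrib,
    sum_Icc_succ_top (by omega : 1 ≤ n + 1), add_mul, sum_mul]
  simp only [Nat.add_sub_cancel_left, Icc_self, sum_singleton]
  ring

lemma six_mul_mul_triangleSum [CommRing R] (r : R) (n : ℕ) :
    6 * (1 + 4 * r + r ^ 2) * triangleSum r n
      = 6 * r * (r + 1) * ∑ k ∈ Icc 1 n, (k : R) ^ 3 * r ^ k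
        + n * (n + 1) * (4 * n + 5) * r ^ (n + 2) + n * (n + 1) * (2 * n + 1) * r ^ (n + 3) := by
  induction n with
  | zero => simp [triangleSum]
  | succ n ih =>
    rw [triangleSum_succ, sum_Icc_succ_top (by omega : 1 ≤ n + 1) fun k => (k : R) ^ 3 * r ^ k]
    have hsq := six_mul_sum_Icc_sq (R := R) (n + 1)
    push_cast at hsq ⊢
    linear_combination ih + (1 + 4 * r + r ^ 2) * r ^ (n + 2) * hsq

lemma triangleSum_le_mul_sum [CommSemiring R] [PartialOrder R] [IsOrderedRing R] {r : R}
    (hr : 0 ≤ r) (n : ℕ) :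
    triangleSum r n ≤ (∑ j ∈ Icc 1 n, r ^ j) * ∑ k ∈ Icc 1 n, (k : R) ^ 2 * r ^ k := by
  rw [triangleSum, mul_comm, sum_mul]
  refine sum_le_sum fun k hk => mul_le_mul_of_nonneg_left ?_ (by positivity)
  exact sum_le_sum_of_subset_of_nonneg (Icc_subset_Icc le_rfl (by grind))
    fun j _ _ => pow_nonneg hr j

theorem stmt6_general (n : ℕ) (r : ℝ) (hr0 : 0 < r) :
    (r ^ 2 + 4 * r + 1) * (∑ k ∈ Finset.Icc 1 n, r ^ k)
        * (∑ k ∈ Finset.Icc 1 n, (k : ℝ) ^ 2 * r ^ k)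
      ≥ r * (r + 1) * (∑ k ∈ Finset.Icc 1 n, (k : ℝ) ^ 3 * r ^ k) := by
  have hidentity := six_mul_mul_triangleSum r n
  have hcorrection :
      0 ≤ n * (n + 1) * (4 * n + 5) * r ^ (n + 2) + n * (n + 1) * (2 * n + 1) * r ^ (n + 3) := by
    positivity
  have htriangle := mul_le_mul_of_nonneg_left (triangleSum_le_mul_sum hr0.le n)
    (by positivity : 0 ≤ r ^ 2 + 4 * r + 1)
  rw [ge_iff_le, mul_assoc (r ^ 2 + 4 * r + 1)]
  linarith

theorem stmt6 (n : ℕ) (hn : 1 ≤ n) (r : ℝ) (hr0 : 0 < r) (hr1 : r ≤ 1) :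
    (r ^ 2 + 4 * r + 1) * (∑ k ∈ Finset.Icc 1 n, r ^ k)
        * (∑ k ∈ Finset.Icc 1 n, (k : ℝ) ^ 2 * r ^ k)
      ≥ r * (r + 1) * (∑ k ∈ Finset.Icc 1 n, (k : ℝ) ^ 3 * r ^ k) :=
  stmt6_general n r hr0
end

section
/- For all n ∈ ℤ⁺ and all real r with 0 < r ≤ 1, (r² + 10r + 1)·(Σ_{k=1}^{n} k² r^k)² ≥ (r+1)·(Σ_{k=1}^{n} k⁴ r^k)·(Σ_{k=1}^{n} r^k). -/
/-!
Multiplying by `(1 - r) ^ 6` and inserting the closed forms of `∑ k ^ m r ^ k` for `m = 0, 2, 4`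
shows that the difference of the two sides equals `r ^ (n + 1) ∑_{t=1}^{n+1} a(n, t) r ^ t`, where
`a = excessCoeff` is a polynomial with nonnegative coefficients in `t - 1` and `n + 1 - t`. Proving this in
`ℤ[X]`, where `(1 - X) ^ 6` can be cancelled, makes it an identity in every commutative ring.
-/

open Finset Polynomial

section PowerSums

variable {R : Type*} [CommRing R]

def excessCoeff (x t : R) : R :=
  2*x*t^2 - 2*x*t^4 + 2*x^2 - 6*x^2*t + 12*x^2*t^2 - 4*x^2*t^3 + 4*x^3*t^2 - x^4 + 2*x^4*t

def sumSqTail (x r : R) : R :=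
  1 + r + 2*x - 2*x*r + x^2 - 2*x^2*r + x^2*r^2

def sumQuartTail (x r : R) : R :=
  1 + 11*r + 11*r^2 + r^3 + 4*x + 12*x*r - 12*x*r^2 - 4*x*r^3 + 6*x^2 - 6*x^2*r - 6*x^2*r^2
  + 6*x^2*r^3 + 4*x^3 - 12*x^3*r + 12*x^3*r^2 - 4*x^3*r^3 + x^4 - 4*x^4*r + 6*x^4*r^2
  - 4*x^4*r^3 + x^4*r^4

def excessSumHead (x r : R) : R :=
  -24*x*r^2 - 24*x*r^3 + 4*x^2*r - 14*x^2*r^2 - 6*x^2*r^3 + 14*x^2*r^4 + 2*x^2*r^5 + 4*x^3*r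
  - 4*x^3*r^2 - 4*x^3*r^3 + 4*x^3*r^4 + x^4*r - 2*x^4*r^2 + 2*x^4*r^4 - x^4*r^5

def excessSumTail (x m r : R) : R :=
  -24*x*r - 24*x*r^2 - 4*x*m - 36*x*m*r + 36*x*m*r^2 + 4*x*m*r^3 - 10*x*m^2 + 4*x*m^2*r
  + 24*x*m^2*r^2 - 20*x*m^2*r^3 + 2*x*m^2*r^4 - 8*x*m^3 + 24*x*m^3*r - 24*x*m^3*r^2
  + 8*x*m^3*r^3 - 2*x*m^4 + 8*x*m^4*r - 12*x*m^4*r^2 + 8*x*m^4*r^3 - 2*x*m^4*r^4 + 4*x^2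
  - 14*x^2*r - 6*x^2*r^2 + 14*x^2*r^3 + 2*x^2*r^4 + 6*x^2*m - 36*x^2*m*r + 48*x^2*m*r^2
  - 12*x^2*m*r^3 - 6*x^2*m*r^4 - 12*x^2*m^2*r + 36*x^2*m^2*r^2 - 36*x^2*m^2*r^3
  + 12*x^2*m^2*r^4 - 4*x^2*m^3 + 16*x^2*m^3*r - 24*x^2*m^3*r^2 + 16*x^2*m^3*r^3
  - 4*x^2*m^3*r^4 + 4*x^3 - 4*x^3*r - 4*x^3*r^2 + 4*x^3*r^3 + 8*x^3*m - 24*x^3*m*r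
  + 24*x^3*m*r^2 - 8*x^3*m*r^3 + 4*x^3*m^2 - 16*x^3*m^2*r + 24*x^3*m^2*r^2 - 16*x^3*m^2*r^3
  + 4*x^3*m^2*r^4 + x^4 - 2*x^4*r + 2*x^4*r^3 - x^4*r^4 + 2*x^4*m - 8*x^4*m*r
  + 12*x^4*m*r^2 - 8*x^4*m*r^3 + 2*x^4*m*r^4

lemma one_sub_mul_sum_pow (n : ℕ) (r : R) :
    (1 - r) * ∑ k ∈ Icc 1 n, r ^ k = r - r ^ (n + 1) := by
  induction n with
  | zero => simp
  | succ n ih =>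
    rw [sum_Icc_succ_top (by omega), mul_add, ih]
    ring

lemma one_sub_pow_three_mul_sum_sq_mul_pow (n : ℕ) (r : R) :
    (1 - r) ^ 3 * ∑ k ∈ Icc 1 n, (k : R) ^ 2 * r ^ k
      = r + r ^ 2 - r ^ (n + 1) * sumSqTail (n : R) r := by
  induction n with
  | zero => simp [sumSqTail]; ring
  | succ n ih =>
    rw [sum_Icc_succ_top (by omega), mul_add, ih]
    simp only [sumSqTail]
    push_cast
    ring

lemma one_sub_pow_five_mul_sum_pow_four_mul_pow (n : ℕ) (r : R) :
    (1 - r) ^ 5 * ∑ k ∈ Icc 1 n, (k : R) ^ 4 * r ^ k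
      = r + 11 * r ^ 2 + 11 * r ^ 3 + r ^ 4 - r ^ (n + 1) * sumQuartTail (n : R) r := by
  induction n with
  | zero => simp [sumQuartTail]; ring
  | succ n ih =>
    rw [sum_Icc_succ_top (by omega), mul_add, ih]
    simp only [sumQuartTail]
    push_cast
    ring

lemma one_sub_pow_five_mul_sum_excessCoeff_mul_pow (x : R) (m : ℕ) (r : R) :
    (1 - r) ^ 5 * ∑ t ∈ Icc 1 m, excessCoeff x (t : R) * r ^ t
      = excessSumHead x r - r ^ (m + 1) * excessSumTail x (m : R) r := by
  induction m with
  | zero => simp [excessSumHead, excessSumTail]; ring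
  | succ m ih =>
    rw [sum_Icc_succ_top (by omega), mul_add, ih]
    simp only [excessCoeff, excessSumHead, excessSumTail]
    push_cast
    ring

lemma one_sub_pow_six_mul_power_sum_excess (n : ℕ) (r : R) :
    (1 - r) ^ 6 * ((r ^ 2 + 10 * r + 1) * (∑ k ∈ Icc 1 n, (k : R) ^ 2 * r ^ k) ^ 2
        - (r + 1) * (∑ k ∈ Icc 1 n, (k : R) ^ 4 * r ^ k) * ∑ k ∈ Icc 1 n, r ^ k)
      = (1 - r) ^ 6 *
          (r ^ (n + 1) * ∑ t ∈ Icc 1 (n + 1), excessCoeff (n : R) (t : R) * r ^ t) := by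
  have hA := one_sub_pow_five_mul_sum_excessCoeff_mul_pow (n : R) (n + 1) r
  push_cast at hA
  calc _ = (r ^ 2 + 10 * r + 1) * ((1 - r) ^ 3 * ∑ k ∈ Icc 1 n, (k : R) ^ 2 * r ^ k) ^ 2
        - (r + 1) * ((1 - r) ^ 5 * ∑ k ∈ Icc 1 n, (k : R) ^ 4 * r ^ k)
          * ((1 - r) * ∑ k ∈ Icc 1 n, r ^ k) := by ring
    _ = (r ^ 2 + 10 * r + 1) * (r + r ^ 2 - r ^ (n + 1) * sumSqTail (n : R) r) ^ 2
        - (r + 1) * (r + 11 * r ^ 2 + 11 * r ^ 3 + r ^ 4 - r ^ (n + 1) * sumQuartTail (n : R) r)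
          * (r - r ^ (n + 1)) := by
      rw [one_sub_pow_three_mul_sum_sq_mul_pow, one_sub_pow_five_mul_sum_pow_four_mul_pow,
        one_sub_mul_sum_pow]
    _ = (1 - r) * r ^ (n + 1) * (excessSumHead (n : R) r
          - r ^ (n + 1 + 1) * excessSumTail (n : R) ((n : R) + 1) r) := by
      simp only [sumSqTail, sumQuartTail, excessSumHead, excessSumTail]
      ring
    _ = _ := by rw [← hA]; ring

theorem power_sum_excess_eq (n : ℕ) (r : R) :
    (r ^ 2 + 10 * r + 1) * (∑ k ∈ Icc 1 n, (k : R) ^ 2 * r ^ k) ^ 2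
        - (r + 1) * (∑ k ∈ Icc 1 n, (k : R) ^ 4 * r ^ k) * ∑ k ∈ Icc 1 n, r ^ k
      = r ^ (n + 1) * ∑ t ∈ Icc 1 (n + 1), excessCoeff (n : R) (t : R) * r ^ t := by
  have hX : (1 - X : ℤ[X]) ^ 6 ≠ 0 :=
    pow_ne_zero 6 fun h => by simpa using congrArg (eval 0) h
  have h := congrArg (aeval r) (mul_left_cancel₀ hX (one_sub_pow_six_mul_power_sum_excess n X))
  simpa [excessCoeff, map_ofNat] using h

lemma excessCoeff_add_add_one (s e : R) :
    excessCoeff (s + e) (s + 1) = 4*e^2 + 4*e^3 + e^4 + 4*s*e + 18*s*e^2 + 12*s*e^3 + 2*s*e^4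
      + 14*s^2*e + 30*s^2*e^2 + 12*s^2*e^3 + 20*s^3*e + 20*s^3*e^2 + s^4 + 10*s^4*e := by
  simp only [excessCoeff]
  ring

lemma excessCoeff_natCast_nonneg [PartialOrder R] [IsOrderedRing R]
    {n t : ℕ} (ht : 1 ≤ t) (htn : t ≤ n + 1) : 0 ≤ excessCoeff (n : R) (t : R) := by
  obtain ⟨s, rfl⟩ : ∃ s, t = s + 1 := ⟨t - 1, by omega⟩
  obtain ⟨e, rfl⟩ : ∃ e, n = s + e := ⟨n - s, by omega⟩
  push_cast
  rw [excessCoeff_add_add_one]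
  norm_cast
  exact Nat.cast_nonneg _

theorem power_sum_inequality [PartialOrder R] [IsOrderedRing R] (n : ℕ) {r : R} (hr : 0 ≤ r) :
    (r + 1) * (∑ k ∈ Icc 1 n, (k : R) ^ 4 * r ^ k) * ∑ k ∈ Icc 1 n, r ^ k
      ≤ (r ^ 2 + 10 * r + 1) * (∑ k ∈ Icc 1 n, (k : R) ^ 2 * r ^ k) ^ 2 := by
  rw [← sub_nonneg, power_sum_excess_eq]
  refine mul_nonneg (pow_nonneg hr _) (sum_nonneg fun t ht => ?_)
  rw [mem_Icc] at ht
  exact mul_nonneg (excessCoeff_natCast_nonneg ht.1 ht.2) (pow_nonneg hr t)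

end PowerSums

theorem stmt8_general (n : ℕ) (r : ℝ) (hr0 : 0 < r) :
    (r ^ 2 + 10 * r + 1) * (∑ k ∈ Finset.Icc 1 n, (k : ℝ) ^ 2 * r ^ k) ^ 2
      ≥ (r + 1) * (∑ k ∈ Finset.Icc 1 n, (k : ℝ) ^ 4 * r ^ k)
          * (∑ k ∈ Finset.Icc 1 n, r ^ k) :=
  power_sum_inequality n hr0.le

theorem stmt8 (n : ℕ) (hn : 1 ≤ n) (r : ℝ) (hr0 : 0 < r) (hr1 : r ≤ 1) :
    (r ^ 2 + 10 * r + 1) * (∑ k ∈ Finset.Icc 1 n, (k : ℝ) ^ 2 * r ^ k) ^ 2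
      ≥ (r + 1) * (∑ k ∈ Finset.Icc 1 n, (k : ℝ) ^ 4 * r ^ k)
          * (∑ k ∈ Finset.Icc 1 n, r ^ k) :=
  stmt8_general n r hr0
end

section
/- For all real x ∈ [-1, 1] and all positive integers n, the Chebyshev polynomial of the first kind satisfies T_n(x) ≥ (-n²(1-x)(2x+3) + 3(1+x)) / (n²(1-x) + 3(1+x)). -/
/-!
Put `x = cos 2φ = 1 - 2 sin² φ` with `φ ∈ [0, π/2]`. Then `T_n(x) = 1 - 2 sin² (nφ)`, and after
clearing the positive denominator the claim becomes
`sin² (nφ) (3 + (n² - 3) sin² φ) ≤ n² sin² φ (3 - 2 sin² φ)`.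
For `n ≤ 2` this is a direct computation. For `n ≥ 3` it follows from `sin² (nφ) ≤ 1` as soon as
`2 n² sin² φ ≥ 3`; otherwise `nφ ≤ 2`, and the Taylor bounds
`t - t³/6 ≤ sin t ≤ t - t³/6 + t⁵/120` (for `t ≥ 0`) reduce it to a polynomial inequality.
-/

open Real Polynomial

lemma Real.cos_le_one_sub_sq_div_two_add_quartic (x : ℝ) :
    cos x ≤ 1 - x ^ 2 / 2 + x ^ 4 / 24 := by
  wlog hx : 0 ≤ x
  · simpa [Even.neg_pow (by decide : Even 4)] using this (-x) (by linarith)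
  let f (t : ℝ) : ℝ := 1 - t ^ 2 / 2 + t ^ 4 / 24 - cos t
  have hderiv (t : ℝ) : deriv f t = sin t - (t - t ^ 3 / 6) := by
    simp (disch := fun_prop) [f]
    ring
  have hmono : MonotoneOn f (Set.Ici 0) := by
    refine monotoneOn_of_deriv_nonneg (convex_Ici 0) (by fun_prop) (by fun_prop) fun t ht ↦ ?_
    rw [interior_Ici] at ht
    linarith [hderiv t, sin_ge_sub_cube (le_of_lt ht)]
  have := hmono Set.self_mem_Ici hx hx
  simp only [f] at this
  norm_num at this
  linarith

lemma Real.sin_le_sub_cube_add_quintic {x : ℝ} (hx : 0 ≤ x) :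
    sin x ≤ x - x ^ 3 / 6 + x ^ 5 / 120 := by
  let f (t : ℝ) : ℝ := t - t ^ 3 / 6 + t ^ 5 / 120 - sin t
  have hderiv (t : ℝ) : deriv f t = 1 - t ^ 2 / 2 + t ^ 4 / 24 - cos t := by
    simp (disch := fun_prop) [f]
    ring
  have hmono : MonotoneOn f (Set.Ici 0) := by
    refine monotoneOn_of_deriv_nonneg (convex_Ici 0) (by fun_prop) (by fun_prop) fun t _ ↦ ?_
    linarith [hderiv t, cos_le_one_sub_sq_div_two_add_quartic t]
  have := hmono Set.self_mem_Ici hx hx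
  simp only [f] at this
  norm_num at this
  linarith

lemma Polynomial.Chebyshev.T_real_one_sub_two_mul_sin_sq (n : ℤ) (φ : ℝ) :
    (T ℝ n).eval (1 - 2 * sin φ ^ 2) = 1 - 2 * sin (n * φ) ^ 2 := by
  rw [← cos_two_mul_eq_one_sub, T_real_cos, mul_left_comm, cos_two_mul_eq_one_sub]

/- With `a = φ ^ 2` and `b = (n * φ) ^ 2`, the factor `(1 - b / 6 + b ^ 2 / 120) ^ 2` bounds
`(sin (n * φ) / (n * φ)) ^ 2` from above and `(1 - a / 6) ^ 2` bounds `(sin φ / φ) ^ 2` from below. -/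
lemma taylor_sq_mul_le_taylor_sq_mul {a b : ℝ} (ha : 0 ≤ a) (hab : 9 * a ≤ b) (hb : b ≤ 4) :
    (1 - b / 6 + b ^ 2 / 120) ^ 2 * (3 - 3 * a + b) ≤ (1 - a / 6) ^ 2 * (3 - 2 * a) := by
  nlinarith [sq_nonneg b, sq_nonneg (b - 9 * a), mul_nonneg ha (sub_nonneg.2 hb),
    mul_nonneg (sub_nonneg.2 hab) (sub_nonneg.2 hb), sq_nonneg (b * b), sq_nonneg a,
    mul_nonneg (mul_nonneg ha ha) ha, sq_nonneg (a * b),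
    mul_nonneg (mul_nonneg (sub_nonneg.2 hab) (sub_nonneg.2 hb)) (sub_nonneg.2 hb),
    mul_nonneg (mul_nonneg ha (sub_nonneg.2 hb)) (sub_nonneg.2 hb)]

lemma sin_nat_mul_sq_mul_le_of_small_angle (n : ℕ) (hn : 3 ≤ n) {φ : ℝ} (h0 : 0 ≤ φ)
    (h2 : φ ≤ π / 2) (hsmall : 2 * n ^ 2 * sin φ ^ 2 < 3) :
    sin (n * φ) ^ 2 * (3 + (n ^ 2 - 3) * sin φ ^ 2) ≤
      n ^ 2 * sin φ ^ 2 * (3 - 2 * sin φ ^ 2) := by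
  set s := sin φ
  set w := (n : ℝ) * φ with hw
  have hn9 : (9 : ℝ) ≤ n ^ 2 := by
    have : (3 : ℝ) ≤ n := by exact_mod_cast hn
    nlinarith
  have hs0 : 0 ≤ s := sin_nonneg_of_nonneg_of_le_pi h0 (by linarith [pi_pos])
  have hsφ : s ≤ φ := sin_le h0
  have hs_lower : φ * (1 - φ ^ 2 / 6) ≤ s := by linarith [sin_ge_sub_cube h0]
  have hw0 : 0 ≤ w := by positivity
  -- Jordan's inequality `2 / π * φ ≤ sin φ` keeps `n * φ` in the range of
  -- `taylor_sq_mul_le_taylor_sq_mul`.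
  have hw2 : w ^ 2 ≤ 4 := by
    have hφ : φ ≤ π / 2 * s := calc
      φ = π / 2 * (2 / π * φ) := by field_simp
      _ ≤ π / 2 * s := by gcongr; exact mul_le_sin h0 h2
    have hw : w ≤ π / 2 * (n * s) := by
      rw [hw, mul_left_comm]
      exact mul_le_mul_of_nonneg_left hφ (Nat.cast_nonneg n)
    have hns : (n * s) ^ 2 < 3 / 2 := by nlinarith
    have : w ^ 2 ≤ (π / 2) ^ 2 * (n * s) ^ 2 := by
      rw [← mul_pow]
      exact pow_le_pow_left₀ hw0 hw 2
    nlinarith [pi_lt_d2, pi_pos]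
  have hφ2 : 9 * φ ^ 2 ≤ w ^ 2 := by rw [hw, mul_pow]; gcongr
  have hsin_w : sin w ^ 2 ≤ (w * (1 - w ^ 2 / 6 + (w ^ 2) ^ 2 / 120)) ^ 2 := by
    refine pow_le_pow_left₀ (sin_nonneg_of_nonneg_of_le_pi hw0 ?_) ?_ 2
    · nlinarith [pi_gt_three]
    · linarith [sin_le_sub_cube_add_quintic hw0]
  have hfactor : 3 + (n ^ 2 - 3) * s ^ 2 ≤ 3 - 3 * φ ^ 2 + w ^ 2 := by
    have : s ^ 2 ≤ φ ^ 2 := pow_le_pow_left₀ hs0 hsφ 2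
    rw [hw]
    nlinarith
  calc sin w ^ 2 * (3 + (n ^ 2 - 3) * s ^ 2)
      ≤ (w * (1 - w ^ 2 / 6 + (w ^ 2) ^ 2 / 120)) ^ 2 * (3 - 3 * φ ^ 2 + w ^ 2) :=
        mul_le_mul hsin_w hfactor (by nlinarith) (sq_nonneg _)
    _ = w ^ 2 * ((1 - w ^ 2 / 6 + (w ^ 2) ^ 2 / 120) ^ 2 * (3 - 3 * φ ^ 2 + w ^ 2)) := by ring
    _ ≤ w ^ 2 * ((1 - φ ^ 2 / 6) ^ 2 * (3 - 2 * φ ^ 2)) :=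
        mul_le_mul_of_nonneg_left (taylor_sq_mul_le_taylor_sq_mul (sq_nonneg φ) hφ2 hw2)
          (sq_nonneg w)
    _ = n ^ 2 * (φ * (1 - φ ^ 2 / 6)) ^ 2 * (3 - 2 * φ ^ 2) := by ring
    _ ≤ n ^ 2 * s ^ 2 * (3 - 2 * s ^ 2) := by
        have : 0 ≤ 3 - 2 * φ ^ 2 := by linarith
        have : 0 ≤ φ * (1 - φ ^ 2 / 6) := by nlinarith
        gcongr

theorem sin_nat_mul_sq_mul_le (n : ℕ) {φ : ℝ} (h0 : 0 ≤ φ) (h2 : φ ≤ π / 2) :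
    sin (n * φ) ^ 2 * (3 + (n ^ 2 - 3) * sin φ ^ 2) ≤
      n ^ 2 * sin φ ^ 2 * (3 - 2 * sin φ ^ 2) := by
  match n with
  | 0 => simp
  | 1 => exact le_of_eq (by simp only [Nat.cast_one, one_mul, one_pow]; ring)
  | 2 =>
    rw [Nat.cast_ofNat, sin_two_mul]
    nlinarith [sin_sq_add_cos_sq φ, pow_nonneg (sq_nonneg (sin φ)) 3]
  | m + 3 =>
    by_cases hsmall : 2 * ((m + 3 : ℕ) : ℝ) ^ 2 * sin φ ^ 2 < 3
    · exact sin_nat_mul_sq_mul_le_of_small_angle _ (by omega) h0 h2 hsmall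
    · have hm9 : (9 : ℝ) ≤ ((m + 3 : ℕ) : ℝ) ^ 2 := by
        push_cast
        nlinarith [(m.cast_nonneg : (0 : ℝ) ≤ m)]
      -- the right side minus `3 + (n² - 3) sin² φ` is `(1 - sin² φ) (2 n² sin² φ - 3)`
      nlinarith [sin_sq_le_one φ, sin_sq_le_one ((m + 3 : ℕ) * φ), sq_nonneg (sin φ)]

theorem stmt9_general (x : ℝ) (hx1 : -1 ≤ x) (hx2 : x ≤ 1) (n : ℕ) :
    (Polynomial.Chebyshev.T ℝ n).eval x
      ≥ (-(n : ℝ) ^ 2 * (1 - x) * (2 * x + 3) + 3 * (1 + x))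
          / ((n : ℝ) ^ 2 * (1 - x) + 3 * (1 + x)) := by
  rcases n.eq_zero_or_pos with rfl | hn
  · simpa using div_self_le_one (3 * (1 + x))
  have hD : 0 < (n : ℝ) ^ 2 * (1 - x) + 3 * (1 + x) := by
    have : (1 : ℝ) ≤ n ^ 2 := one_le_pow₀ (by exact_mod_cast hn)
    nlinarith
  obtain ⟨φ, h0, h2, rfl⟩ : ∃ φ, 0 ≤ φ ∧ φ ≤ π / 2 ∧ x = 1 - 2 * sin φ ^ 2 :=
    ⟨arccos x / 2, by linarith [arccos_nonneg x], by linarith [arccos_le_pi x], by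
      rw [← cos_two_mul_eq_one_sub, mul_div_cancel₀ _ two_ne_zero, cos_arccos hx1 hx2]⟩
  rw [ge_iff_le, div_le_iff₀ hD, Chebyshev.T_real_one_sub_two_mul_sin_sq]
  push_cast
  nlinarith [sin_nat_mul_sq_mul_le n h0 h2]

theorem stmt9 (x : ℝ) (hx1 : -1 ≤ x) (hx2 : x ≤ 1) (n : ℕ) (hn : 1 ≤ n) :
    (Polynomial.Chebyshev.T ℝ n).eval x
      ≥ (-(n : ℝ) ^ 2 * (1 - x) * (2 * x + 3) + 3 * (1 + x))
          / ((n : ℝ) ^ 2 * (1 - x) + 3 * (1 + x)) :=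
  stmt9_general x hx1 hx2 n
end

section
/- For all real r > 0 and all real b ≥ 2, (1 - r^{b+1})(1 - r^{b-1}) / (r^{b-1}(b²-1)(1-r)²) ≥ (1 + r^{b/3})(1 + r^b) / (2(r^{b/3} + r^b)), where for r = 1 the left side is interpreted as its limit (b+1)(b-1)/(b²-1) = 1. -/
/-!
Substituting `r = exp (-2u)` turns the inequality into
`(b² - 1) sinh² u cosh (bu/3) cosh (bu) ≤ sinh ((b+1)u) sinh ((b-1)u) cosh (2bu/3)`,
which is even in `u`. For `u > 0` put `a = bu ≥ 2u`. The ratio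
`sinh (a+w) sinh (a-w) w² / ((a² - w²) sinh² w)` is decreasing in `w ∈ (0, a/2]`: its logarithmic
derivative is `L (a+w) - L (a-w) - 2 L w` for the Langevin function `L t = coth t - 1/t`, and this
is `≤ 0` because `L` is concave on `(0, ∞)` and `L (3w) ≤ 3 L w`. At `w = a/2` the ratio equals
`(2 cosh a + 1)/3`, which dominates `cosh (a/3) cosh a / cosh (2a/3)`.
-/

open Real Set

theorem Convex.monotoneOn_of_hasDerivAt_nonneg {D : Set ℝ} (hD : Convex ℝ D)
    {f f' : ℝ → ℝ}
    (hf : ∀ x ∈ D, HasDerivAt f (f' x) x) (hf'₀ : ∀ x ∈ interior D, 0 ≤ f' x) :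
    MonotoneOn f D :=
  monotoneOn_of_hasDerivWithinAt_nonneg hD (fun x hx ↦ (hf x hx).continuousAt.continuousWithinAt)
    (fun x hx ↦ (hf x (interior_subset hx)).hasDerivWithinAt) hf'₀

theorem Convex.antitoneOn_of_hasDerivAt_nonpos {D : Set ℝ} (hD : Convex ℝ D)
    {f f' : ℝ → ℝ}
    (hf : ∀ x ∈ D, HasDerivAt f (f' x) x) (hf'₀ : ∀ x ∈ interior D, f' x ≤ 0) :
    AntitoneOn f D :=
  antitoneOn_of_hasDerivWithinAt_nonpos hD (fun x hx ↦ (hf x hx).continuousAt.continuousWithinAt)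
    (fun x hx ↦ (hf x (interior_subset hx)).hasDerivWithinAt) hf'₀

theorem le_of_hasDerivAt_nonneg {f f' : ℝ → ℝ} (hf : ∀ t, HasDerivAt f (f' t) t)
    (hf' : ∀ t, 0 < t → 0 ≤ f' t) {x : ℝ} (hx : 0 ≤ x) : f 0 ≤ f x :=
  (convex_Ici 0).monotoneOn_of_hasDerivAt_nonneg (fun t _ ↦ hf t)
    (fun t ht ↦ hf' t (by rwa [interior_Ici] at ht)) self_mem_Ici hx hx

namespace Real

theorem one_add_sq_div_two_le_cosh {x : ℝ} (hx : 0 ≤ x) : 1 + x ^ 2 / 2 ≤ cosh x := by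
  have := le_of_hasDerivAt_nonneg (f := fun t ↦ cosh t - (1 + t ^ 2 / 2))
    (f' := fun t ↦ sinh t - t)
    (fun t ↦ ((hasDerivAt_cosh t).sub (((hasDerivAt_pow 2 t).div_const 2).const_add 1))
      |>.congr_deriv (by ring))
    (fun t ht ↦ by linarith [self_le_sinh_iff.2 ht.le]) hx
  simpa using this

theorem self_add_cube_div_six_le_sinh {x : ℝ} (hx : 0 ≤ x) : x + x ^ 3 / 6 ≤ sinh x := by
  have := le_of_hasDerivAt_nonneg (f := fun t ↦ sinh t - (t + t ^ 3 / 6))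
    (f' := fun t ↦ cosh t - (1 + t ^ 2 / 2))
    (fun t ↦ ((hasDerivAt_sinh t).sub ((hasDerivAt_id t).add ((hasDerivAt_pow 3 t).div_const 6)))
      |>.congr_deriv (by ring))
    (fun t ht ↦ by linarith [one_add_sq_div_two_le_cosh ht.le]) hx
  simpa using this

theorem sinh_le_mul_cosh {x : ℝ} (hx : 0 ≤ x) : sinh x ≤ x * cosh x := by
  have := le_of_hasDerivAt_nonneg (f := fun t ↦ t * cosh t - sinh t) (f' := fun t ↦ t * sinh t)
    (fun t ↦ (((hasDerivAt_id' t).mul (hasDerivAt_cosh t)).sub (hasDerivAt_sinh t)).congr_deriv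
      (by ring))
    (fun t ht ↦ mul_nonneg ht.le (sinh_nonneg_iff.2 ht.le)) hx
  simpa using this

theorem pow_three_mul_cosh_le_sinh_pow_three {x : ℝ} (hx : 0 ≤ x) :
    x ^ 3 * cosh x ≤ sinh x ^ 3 := by
  have := le_of_hasDerivAt_nonneg (f := fun t ↦ sinh t ^ 3 - t ^ 3 * cosh t)
    (f' := fun t ↦ 3 * sinh t ^ 2 * cosh t - (3 * t ^ 2 * cosh t + t ^ 3 * sinh t))
    (fun t ↦ (((hasDerivAt_sinh t).pow 3).sub ((hasDerivAt_pow 3 t).mul (hasDerivAt_cosh t)))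
      |>.congr_deriv (by ring))
    (fun t ht ↦ by
      have hs := self_add_cube_div_six_le_sinh ht.le
      have hsq : t ^ 2 + t ^ 4 / 3 ≤ sinh t ^ 2 := by
        nlinarith [mul_le_mul hs hs (by positivity) (sinh_nonneg_iff.2 ht.le), pow_nonneg ht.le 6]
      nlinarith [mul_le_mul_of_nonneg_left hsq (cosh_pos t).le,
        mul_le_mul_of_nonneg_left (sinh_le_mul_cosh ht.le) (pow_nonneg ht.le 3)]) hx
  simpa using this

theorem sinh_three_mul_le {x : ℝ} (hx : 0 ≤ x) : sinh (3 * x) ≤ 3 * x * cosh x ^ 3 := by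
  have := le_of_hasDerivAt_nonneg (f := fun t ↦ 3 * t * cosh t ^ 3 - sinh (3 * t))
    (f' := fun t ↦ 9 * cosh t * (t * cosh t * sinh t - sinh t ^ 2))
    (fun t ↦ ((((hasDerivAt_id' t).const_mul 3).mul ((hasDerivAt_cosh t).pow 3)).sub
      ((hasDerivAt_id' t).const_mul 3).sinh).congr_deriv
      (by rw [cosh_three_mul, Pi.pow_apply]; linear_combination (-9 * cosh t) * cosh_sq t))
    (fun t ht ↦ mul_nonneg (mul_nonneg (by norm_num) (cosh_pos t).le) <| by
      nlinarith [mul_le_mul_of_nonneg_left (sinh_le_mul_cosh ht.le) (sinh_nonneg_iff.2 ht.le)]) hx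
  simpa using this

theorem exp_neg_two_mul_rpow (u s : ℝ) :
    exp (-(2 * u)) ^ s = exp (-(s * u)) * exp (-(s * u)) := by
  rw [← exp_mul, ← exp_add]; ring_nf

theorem exp_neg_mul_exp (x : ℝ) : exp (-x) * exp x = 1 := by
  rw [← exp_add, neg_add_cancel, exp_zero]

theorem one_sub_exp_neg_two_mul_rpow (u s : ℝ) :
    1 - exp (-(2 * u)) ^ s = 2 * exp (-(s * u)) * sinh (s * u) := by
  rw [sinh_eq, exp_neg_two_mul_rpow]
  linear_combination -exp_neg_mul_exp (s * u)

theorem one_add_exp_neg_two_mul_rpow (u s : ℝ) :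
    1 + exp (-(2 * u)) ^ s = 2 * exp (-(s * u)) * cosh (s * u) := by
  rw [cosh_eq, exp_neg_two_mul_rpow]
  linear_combination -exp_neg_mul_exp (s * u)

theorem exp_neg_two_mul_rpow_add_rpow (u s t : ℝ) :
    exp (-(2 * u)) ^ s + exp (-(2 * u)) ^ t = 2 * exp (-((s + t) * u)) * cosh ((s - t) * u) := by
  rw [cosh_eq,
    show ∀ a x y : ℝ, 2 * a * ((x + y) / 2) = a * x + a * y from fun _ _ _ ↦ by ring,
    ← exp_add, ← exp_add, ← exp_mul, ← exp_mul]
  ring_nf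

end Real

noncomputable def langevin (t : ℝ) : ℝ := cosh t / sinh t - 1 / t

theorem hasDerivAt_langevin {t : ℝ} (ht : 0 < t) :
    HasDerivAt langevin (1 / t ^ 2 - 1 / sinh t ^ 2) t := by
  have hs := sinh_pos_iff.2 ht
  refine (((hasDerivAt_cosh t).div (hasDerivAt_sinh t) hs.ne').sub
    ((hasDerivAt_const t 1).div (hasDerivAt_id' t) ht.ne')).congr_deriv ?_
  field_simp
  linear_combination (-t ^ 2) * cosh_sq_sub_sinh_sq t

theorem antitoneOn_deriv_langevin :
    AntitoneOn (fun t ↦ 1 / t ^ 2 - 1 / sinh t ^ 2) (Ioi 0) := by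
  refine (convex_Ioi 0).antitoneOn_of_hasDerivAt_nonpos
    (f' := fun t ↦ 2 * cosh t / sinh t ^ 3 - 2 / t ^ 3) (fun t ht ↦ ?_) (fun t ht ↦ ?_)
  · rw [mem_Ioi] at ht
    have hs := sinh_pos_iff.2 ht
    refine (((hasDerivAt_const t 1).div (hasDerivAt_pow 2 t) (by positivity)).sub
      ((hasDerivAt_const t 1).div ((hasDerivAt_sinh t).pow 2) (pow_pos hs 2).ne')).congr_deriv ?_
    simp only [Pi.pow_apply]
    field_simp
    ring
  · rw [interior_Ioi, mem_Ioi] at ht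
    have hs := sinh_pos_iff.2 ht
    rw [sub_nonpos, div_le_div_iff₀ (by positivity) (by positivity)]
    nlinarith [pow_three_mul_cosh_le_sinh_pow_three ht.le]

theorem langevin_three_mul_le {u : ℝ} (hu : 0 < u) : langevin (3 * u) ≤ 3 * langevin u := by
  have hs := sinh_pos_iff.2 hu
  have key : 4 * sinh u ^ 3 + 3 * sinh u ≤ 3 * u * cosh u * (sinh u ^ 2 + 1) := by
    rw [← sinh_three_mul, ← cosh_sq]
    linarith [sinh_three_mul_le hu.le]
  have hC : cosh (3 * u) = cosh u * (4 * sinh u ^ 2 + 1) := by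
    rw [cosh_three_mul]; linear_combination (4 * cosh u) * cosh_sq u
  have hL : langevin (3 * u) =
      (cosh u * (4 * sinh u ^ 2 + 1) * u - (4 * sinh u ^ 3 + 3 * sinh u) / 3) /
        ((4 * sinh u ^ 3 + 3 * sinh u) * u) := by
    rw [langevin, sinh_three_mul, hC]; field_simp
  have hR : 3 * langevin u = 3 * (cosh u * u - sinh u) / (sinh u * u) := by
    rw [langevin]; field_simp
  rw [hL, hR, div_le_div_iff₀ (by positivity) (by positivity)]
  nlinarith [mul_nonneg hs.le (sub_nonneg.2 key), mul_pos hu hs]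

theorem antitoneOn_add_sub_of_antitoneOn_deriv {f f' : ℝ → ℝ} {a h : ℝ} (hh : 0 ≤ h)
    (hf : ∀ x, a < x → HasDerivAt f (f' x) x) (hf' : AntitoneOn f' (Ioi a)) :
    AntitoneOn (fun x ↦ f (x + h) - f x) (Ioi a) :=
  (convex_Ioi a).antitoneOn_of_hasDerivAt_nonpos
    (fun x hx ↦ ((hf _ (by linarith [mem_Ioi.1 hx])).comp_add_const x h).sub (hf x hx))
    (fun x hx ↦ by
      rw [interior_Ioi] at hx
      linarith [hf' hx (mem_Ioi.2 (by linarith [mem_Ioi.1 hx])) (by linarith : x ≤ x + h)])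

theorem langevin_add_two_mul_le {u q : ℝ} (hu : 0 < u) (huq : u ≤ q) :
    langevin (q + 2 * u) ≤ langevin q + 2 * langevin u := by
  have hmono := antitoneOn_add_sub_of_antitoneOn_deriv (h := 2 * u) (by linarith)
    (fun x hx ↦ hasDerivAt_langevin hx) antitoneOn_deriv_langevin hu (hu.trans_le huq) huq
  simp only [show u + 2 * u = 3 * u by ring] at hmono
  linarith [langevin_three_mul_le hu]

theorem one_sub_rpow_mul_one_sub_rpow_div (u b c : ℝ) :
    (1 - exp (-(2 * u)) ^ (b + 1)) * (1 - exp (-(2 * u)) ^ (b - 1)) /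
        (exp (-(2 * u)) ^ (b - 1) * c * (1 - exp (-(2 * u))) ^ 2) =
      sinh ((b + 1) * u) * sinh ((b - 1) * u) / (c * sinh u ^ 2) := by
  have h1 : 1 - exp (-(2 * u)) = 2 * exp (-u) * sinh u := by
    simpa using one_sub_exp_neg_two_mul_rpow u 1
  have hE : exp (-((b + 1) * u)) * exp (-((b - 1) * u)) =
      exp (-(2 * u)) ^ (b - 1) * exp (-u) ^ 2 := by
    rw [exp_neg_two_mul_rpow, ← exp_add, ← exp_nat_mul, ← exp_add, ← exp_add]; ring_nf
  rw [one_sub_exp_neg_two_mul_rpow, one_sub_exp_neg_two_mul_rpow, h1]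
  calc _ = 4 * (exp (-((b + 1) * u)) * exp (-((b - 1) * u))) *
          (sinh ((b + 1) * u) * sinh ((b - 1) * u)) /
        (4 * (exp (-(2 * u)) ^ (b - 1) * exp (-u) ^ 2) * (c * sinh u ^ 2)) := by ring
    _ = _ := by rw [hE, mul_div_mul_left _ _ (by positivity)]

theorem one_add_rpow_mul_one_add_rpow_div (u s t : ℝ) :
    (1 + exp (-(2 * u)) ^ s) * (1 + exp (-(2 * u)) ^ t) /
        (2 * (exp (-(2 * u)) ^ s + exp (-(2 * u)) ^ t)) =
      cosh (s * u) * cosh (t * u) / cosh ((s - t) * u) := by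
  have hE : exp (-(s * u)) * exp (-(t * u)) = exp (-((s + t) * u)) := by
    rw [← exp_add]; ring_nf
  rw [one_add_exp_neg_two_mul_rpow, one_add_exp_neg_two_mul_rpow, exp_neg_two_mul_rpow_add_rpow]
  calc _ = 4 * (exp (-(s * u)) * exp (-(t * u))) * (cosh (s * u) * cosh (t * u)) /
        (4 * exp (-((s + t) * u)) * cosh ((s - t) * u)) := by ring
    _ = _ := by rw [hE, mul_div_mul_left _ _ (by positivity)]

noncomputable def logSinhRatio (a w : ℝ) : ℝ :=
  log (sinh (a + w)) + log (sinh (a - w)) + 2 * log w - log (a + w) - log (a - w) - 2 * log (sinh w)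

theorem exp_logSinhRatio {a w : ℝ} (hw : 0 < w) (hwa : w < a) :
    exp (logSinhRatio a w) =
      sinh (a + w) * sinh (a - w) * w ^ 2 / ((a + w) * (a - w) * sinh w ^ 2) := by
  have hp : 0 < a + w := by linarith
  have hm : 0 < a - w := by linarith
  have exp_two_mul_log : ∀ x : ℝ, 0 < x → exp (2 * log x) = x ^ 2 := fun x hx ↦ by
    rw [two_mul, exp_add, exp_log hx, sq]
  simp only [logSinhRatio, exp_sub, exp_add, exp_log hp, exp_log hm, exp_log (sinh_pos_iff.2 hp),
    exp_log (sinh_pos_iff.2 hm), exp_two_mul_log w hw, exp_two_mul_log _ (sinh_pos_iff.2 hw)]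
  field_simp

theorem hasDerivAt_logSinhRatio {a w : ℝ} (hw : 0 < w) (hwa : w < a) :
    HasDerivAt (logSinhRatio a) (langevin (a + w) - langevin (a - w) - 2 * langevin w) w := by
  have hp : 0 < a + w := by linarith
  have hm : 0 < a - w := by linarith
  have hs := sinh_pos_iff.2 hw
  have hplus := (hasDerivAt_id' w).const_add a
  have hminus := (hasDerivAt_id' w).const_sub a
  refine (((((hplus.sinh.log (sinh_pos_iff.2 hp).ne').add
    (hminus.sinh.log (sinh_pos_iff.2 hm).ne')).add
    ((hasDerivAt_log hw.ne').const_mul 2)).sub (hplus.log hp.ne')).sub (hminus.log hm.ne')).sub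
    (((hasDerivAt_sinh w).log hs.ne').const_mul 2) |>.congr_deriv ?_
  simp only [langevin]
  field_simp
  ring

theorem antitoneOn_logSinhRatio (a : ℝ) : AntitoneOn (logSinhRatio a) (Ioc 0 (a / 2)) :=
  (convex_Ioc 0 (a / 2)).antitoneOn_of_hasDerivAt_nonpos
    (fun w hw ↦ hasDerivAt_logSinhRatio hw.1 (by linarith [hw.1, hw.2]))
    (fun w hw ↦ by
      rw [interior_Ioc] at hw
      have := langevin_add_two_mul_le hw.1 (by linarith [hw.2] : w ≤ a - w)
      rw [show a - w + 2 * w = a + w by ring] at this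
      linarith)

theorem cosh_mul_cosh_three_mul_div_le (v : ℝ) :
    cosh v * cosh (3 * v) / cosh (2 * v) ≤ (2 * cosh (3 * v) + 1) / 3 := by
  have hc := one_le_cosh v
  have h2 : cosh (2 * v) = 2 * cosh v ^ 2 - 1 := by
    rw [cosh_two_mul]; linear_combination -cosh_sq v
  rw [div_le_div_iff₀ (cosh_pos _) three_pos, h2, cosh_three_mul]
  -- with `c = cosh v`, the difference of the two sides is `(c - 1)² (16c³ + 20c² + 4c - 1)`
  nlinarith [mul_nonneg (sq_nonneg (cosh v - 1))
    (by nlinarith : (0 : ℝ) ≤ 16 * cosh v ^ 3 + 20 * cosh v ^ 2 + 4 * cosh v - 1)]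

theorem sinh_ratio_half {a : ℝ} (ha : 0 < a) :
    sinh (a + a / 2) * sinh (a - a / 2) * (a / 2) ^ 2 /
        ((a + a / 2) * (a - a / 2) * sinh (a / 2) ^ 2) = (2 * cosh a + 1) / 3 := by
  obtain ⟨x, rfl⟩ : ∃ x, a = 2 * x := ⟨a / 2, by ring⟩
  have hx : 0 < x := by linarith
  have hs := sinh_pos_iff.2 hx
  have h3 : sinh (3 * x) = sinh x * (2 * cosh (2 * x) + 1) := by
    rw [sinh_three_mul, cosh_two_mul, cosh_sq]
    ring
  rw [show 2 * x + 2 * x / 2 = 3 * x by ring, show 2 * x - 2 * x / 2 = x by ring,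
    show 2 * x / 2 = x by ring, h3]
  field_simp

theorem cosh_mul_cosh_div_le_sinh_ratio {v u : ℝ} (hu : 0 < u) (huv : u ≤ 3 * v / 2) :
    cosh v * cosh (3 * v) / cosh (2 * v) ≤
      sinh (3 * v + u) * sinh (3 * v - u) * u ^ 2 / ((3 * v + u) * (3 * v - u) * sinh u ^ 2) := by
  have ha : 0 < 3 * v := by linarith
  have hmono := antitoneOn_logSinhRatio (3 * v) ⟨hu, huv⟩ ⟨half_pos ha, le_rfl⟩ huv
  rw [← exp_le_exp, exp_logSinhRatio hu (by linarith),
    exp_logSinhRatio (half_pos ha) (by linarith), sinh_ratio_half ha] at hmono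
  exact (cosh_mul_cosh_three_mul_div_le v).trans hmono

theorem cosh_mul_cosh_div_le_sinh_mul_sinh_div {u b : ℝ} (hu : u ≠ 0) (hb : 2 ≤ b) :
    cosh (b / 3 * u) * cosh (b * u) / cosh ((b / 3 - b) * u) ≤
      sinh ((b + 1) * u) * sinh ((b - 1) * u) / ((b ^ 2 - 1) * sinh u ^ 2) := by
  wlog hu' : 0 < u generalizing u
  · simpa [mul_neg, sinh_neg, cosh_neg] using
      this (neg_ne_zero.2 hu) (neg_pos.2 (lt_of_le_of_ne (not_lt.1 hu') hu))
  have := cosh_mul_cosh_div_le_sinh_ratio (v := b / 3 * u) hu' (by nlinarith)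
  convert this using 1
  · rw [← cosh_neg ((b / 3 - b) * u)]
    ring_nf
  · rw [show (3 * (b / 3 * u) + u) * (3 * (b / 3 * u) - u) * sinh u ^ 2 =
        (b ^ 2 - 1) * sinh u ^ 2 * u ^ 2 by ring, mul_div_mul_right _ _ (pow_ne_zero 2 hu)]
    ring_nf

theorem stmt10 (r b : ℝ) (hr : 0 < r) (hb : 2 ≤ b) :
    (if r = 1 then (1 : ℝ)
      else (1 - r ^ (b + 1)) * (1 - r ^ (b - 1)) / (r ^ (b - 1) * (b ^ 2 - 1) * (1 - r) ^ 2))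
      ≥ (1 + r ^ (b / 3)) * (1 + r ^ b) / (2 * (r ^ (b / 3) + r ^ b)) := by
  split_ifs with hr1
  · subst hr1
    norm_num
  obtain ⟨u, rfl⟩ : ∃ u, r = exp (-(2 * u)) :=
    ⟨-log r / 2, by rw [show -(2 * (-log r / 2)) = log r by ring, exp_log hr]⟩
  have hu : u ≠ 0 := by
    rintro rfl
    simp at hr1
  rw [ge_iff_le, one_add_rpow_mul_one_add_rpow_div, one_sub_rpow_mul_one_sub_rpow_div]
  exact cosh_mul_cosh_div_le_sinh_mul_sinh_div hu hb
end

section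
/- For all real r with 0 < r ≤ 1 and all integers n ≥ 1, ((1-r^n)/(1-r))² ≥ d/dr[(1-r^n)/(1-r)] ≥ (1-r^n)(1-r^{(n-1)/2})/(1-r)², where at r = 1 the quantities are interpreted as limits. -/
/-!
Write `S = ∑_{k<n} rᵏ` and `D = S'`. Expanding `k rᵏ⁻¹ = ∑_{i+j=k-1} rⁱ rʲ` shows that `D` is a
subsum of the Cauchy product `S²`. For the lower bound, telescoping gives `(1 - r) D = S - n rⁿ⁻¹`;
with `s = r^((n-1)/2)` the claim becomes `(1 - r) s (S - n s) ≥ 0`, and `n s ≤ S` is AM-GM for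
the numbers `rᵏ`, whose geometric mean is exactly `s`.
-/

open Real Finset

theorem deriv_geom_sum (n : ℕ) (r : ℝ) :
    deriv (fun x : ℝ => ∑ k ∈ range n, x ^ k) r = ∑ k ∈ range n, (k : ℝ) * r ^ (k - 1) := by
  rw [deriv_fun_sum fun k _ => differentiableAt_pow k]
  simp only [deriv_pow_field]

theorem sum_range_natCast_id (n : ℕ) : ∑ k ∈ range n, (k : ℝ) = n * (n - 1) / 2 := by
  induction n with
  | zero => simp
  | succ n ih => rw [sum_range_succ, ih]; push_cast; ring

theorem geom_sum_sq_eq_ite (n : ℕ) (r : ℝ) :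
    (∑ k ∈ range n, r ^ k) ^ 2
      = if r = 1 then (n : ℝ) ^ 2 else ((1 - r ^ n) / (1 - r)) ^ 2 := by
  split_ifs with h
  · simp [h]
  · rw [geom_sum_eq h, ← neg_div_neg_eq, neg_sub, neg_sub]

theorem sum_mul_pow_pred_le_geom_sum_sq {r : ℝ} (hr : 0 ≤ r) (n : ℕ) :
    ∑ k ∈ range n, (k : ℝ) * r ^ (k - 1) ≤ (∑ k ∈ range n, r ^ k) ^ 2 := by
  cases n with
  | zero => simp
  | succ n =>
    have hcauchy : ∑ k ∈ range (n + 1), (k : ℝ) * r ^ (k - 1)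
        = ∑ i ∈ range n, ∑ j ∈ range (n - i), r ^ i * r ^ j := by
      rw [sum_range_succ', ← sum_range_diag_flip]
      simp only [CharP.cast_eq_zero, zero_mul, add_zero]
      refine sum_congr rfl fun m _ => ?_
      simpa using (geom_sum₂_self r (m + 1)).symm
    calc ∑ k ∈ range (n + 1), (k : ℝ) * r ^ (k - 1)
        ≤ ∑ i ∈ range n, ∑ j ∈ range n, r ^ i * r ^ j := by
          rw [hcauchy]
          gcongr with i
          exact Nat.sub_le n i
      _ = (∑ k ∈ range n, r ^ k) ^ 2 := by rw [sq, sum_mul_sum]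
      _ ≤ (∑ k ∈ range (n + 1), r ^ k) ^ 2 := by
          gcongr
          exact n.le_succ

theorem one_sub_mul_sum_mul_pow_pred (n : ℕ) (r : ℝ) :
    (1 - r) * ∑ k ∈ range n, (k : ℝ) * r ^ (k - 1) = ∑ k ∈ range n, r ^ k - n * r ^ (n - 1) := by
  induction n with
  | zero => simp
  | succ n ih =>
    rw [sum_range_succ, sum_range_succ, mul_add, ih]
    cases n with
    | zero => simp
    | succ n => simp only [Nat.add_sub_cancel]; push_cast; ring

theorem natCast_mul_rpow_le_geom_sum {r : ℝ} (hr : 0 ≤ r) {n : ℕ} (hn : 0 < n) :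
    n * r ^ (((n : ℝ) - 1) / 2) ≤ ∑ k ∈ range n, r ^ k := by
  have hn' : (0 : ℝ) < n := Nat.cast_pos.2 hn
  have amgm := geom_mean_le_arith_mean (range n) (fun _ => 1) (fun k => r ^ k)
    (fun _ _ => zero_le_one) (by simpa using hn) (fun _ _ => by positivity)
  simp only [rpow_one, one_mul, sum_const, card_range, nsmul_eq_mul, mul_one] at amgm
  rw [prod_pow_eq_pow_sum (range n) (fun k => k) r] at amgm
  rwa [← rpow_natCast, ← rpow_mul hr, Nat.cast_sum, sum_range_natCast_id,
    le_div_iff₀ hn', mul_comm, show (n : ℝ) * (n - 1) / 2 * (n : ℝ)⁻¹ = (n - 1) / 2 by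
      field_simp] at amgm

theorem rpow_half_pred_sq {r : ℝ} (hr : 0 ≤ r) {n : ℕ} (hn : 1 ≤ n) :
    (r ^ (((n : ℝ) - 1) / 2)) ^ 2 = r ^ (n - 1) := by
  rw [← rpow_mul_natCast hr, ← rpow_natCast, Nat.cast_sub hn]
  norm_num

theorem one_sub_pow_mul_one_sub_rpow_div_le {r : ℝ} (hr0 : 0 ≤ r) (hr1 : r < 1) {n : ℕ}
    (hn : 1 ≤ n) :
    (1 - r ^ n) * (1 - r ^ (((n : ℝ) - 1) / 2)) / (1 - r) ^ 2
      ≤ ∑ k ∈ range n, (k : ℝ) * r ^ (k - 1) := by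
  set s := r ^ (((n : ℝ) - 1) / 2)
  set S := ∑ k ∈ range n, r ^ k
  set D := ∑ k ∈ range n, (k : ℝ) * r ^ (k - 1)
  have hD : (1 - r) * D = S - n * s ^ 2 := by
    rw [one_sub_mul_sum_mul_pow_pred, rpow_half_pred_sq hr0 hn]
  have hs : 0 ≤ s := rpow_nonneg hr0 _
  have amgm : n * s ≤ S := natCast_mul_rpow_le_geom_sum hr0 hn
  rw [div_le_iff₀ (pow_pos (sub_pos.2 hr1) 2), ← mul_neg_geom_sum]
  have key : D * (1 - r) ^ 2 - (1 - r) * S * (1 - s) = (1 - r) * s * (S - n * s) := by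
    linear_combination (1 - r) * hD
  linarith [mul_nonneg (mul_nonneg (sub_nonneg.2 hr1.le) hs) (sub_nonneg.2 amgm)]

theorem stmt11 (n : ℕ) (hn : 1 ≤ n) (r : ℝ) (hr0 : 0 < r) (hr1 : r ≤ 1) :
    (if r = 1 then ((n : ℝ) ^ 2)
        else ((1 - r ^ n) / (1 - r)) ^ 2)
      ≥ deriv (fun x : ℝ => ∑ k ∈ Finset.range n, x ^ k) r
    ∧ deriv (fun x : ℝ => ∑ k ∈ Finset.range n, x ^ k) r
      ≥ (if r = 1 then (n : ℝ) * (((n : ℝ) - 1) / 2)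
        else (1 - r ^ n) * (1 - r ^ (((n : ℝ) - 1) / 2)) / (1 - r) ^ 2) := by
  rw [deriv_geom_sum, ← geom_sum_sq_eq_ite]
  refine ⟨sum_mul_pow_pred_le_geom_sum_sq hr0.le n, ?_⟩
  split_ifs with h
  · simp [h, sum_range_natCast_id, mul_div_assoc]
  · exact one_sub_pow_mul_one_sub_rpow_div_le hr0.le (lt_of_le_of_ne hr1 h) hn
end

section
/- For all real r with 0 < r ≤ 1 and all positive reals a ≤ b, r^{(b-a)/2} · (1 - r^a)/(1 - r^b) ≤ a/b, where at r = 1 the quotient is interpreted as its limit a/b. -/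
/-!
Put `t = -log r / 2`, so that `r ^ c = exp (-2 c t)`. Factoring `exp (-b t)` out of the numerator
and the denominator turns the quotient into `sinh (a t) / sinh (b t)`, and this is at most `a / b`
because `sinh x / x` is increasing on `(0, ∞)`: it is the slope of a secant through the origin
of the function `sinh`, which is convex on `[0, ∞)`.
-/

open Real Set

theorem Real.convexOn_sinh : ConvexOn ℝ (Ici 0) sinh := by
  refine MonotoneOn.convexOn_of_deriv (convex_Ici 0) continuous_sinh.continuousOn
    differentiable_sinh.differentiableOn ?_
  rw [deriv_sinh, interior_Ici]
  intro x hx y hy hxy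
  rw [cosh_le_cosh, abs_of_pos hx, abs_of_pos hy]
  exact hxy

theorem Real.sinh_div_le_sinh_div {x y : ℝ} (hx : 0 < x) (hxy : x ≤ y) :
    sinh x / x ≤ sinh y / y := by
  have hy : 0 < y := hx.trans_le hxy
  simpa using convexOn_sinh.secant_mono self_mem_Ici hx.le hy.le hx.ne' hy.ne' hxy

theorem Real.sinh_mul_div_sinh_mul_le {a b t : ℝ} (ha : 0 < a) (hab : a ≤ b) (ht : 0 < t) :
    sinh (a * t) / sinh (b * t) ≤ a / b := by
  have hb : 0 < b := ha.trans_le hab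
  have h := sinh_div_le_sinh_div (mul_pos ha ht) (mul_le_mul_of_nonneg_right hab ht.le)
  rw [div_le_div_iff₀ (by positivity) (by positivity)] at h
  rw [div_le_div_iff₀ (sinh_pos_iff.2 (by positivity)) hb]
  nlinarith

theorem Real.rpow_mul_one_sub_rpow_div_one_sub_rpow {r : ℝ} (hr : 0 < r) (a b : ℝ) :
    r ^ ((b - a) / 2) * (1 - r ^ a) / (1 - r ^ b) =
      sinh (a * (-log r / 2)) / sinh (b * (-log r / 2)) := by
  have hexp (c : ℝ) : r ^ c = exp (c * log r) := by rw [rpow_def_of_pos hr, mul_comm]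
  have hsinh (c : ℝ) :
      sinh (c * (-log r / 2)) = ((exp (c * log r / 2))⁻¹ - exp (c * log r / 2)) / 2 := by
    rw [sinh_eq, ← exp_neg]; ring_nf
  have hsq (c : ℝ) : r ^ c = exp (c * log r / 2) ^ 2 := by rw [hexp, ← exp_nat_mul]; ring_nf
  have hquot : r ^ ((b - a) / 2) = exp (b * log r / 2) / exp (a * log r / 2) := by
    rw [hexp, ← exp_sub]; ring_nf
  have hinv_sub (z : ℝ) (hz : z ≠ 0) : z⁻¹ - z = (1 - z ^ 2) / z := by field_simp
  rw [hquot, hsq a, hsq b, hsinh, hsinh, hinv_sub _ (exp_pos _).ne', hinv_sub _ (exp_pos _).ne',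
    div_div_div_cancel_right₀ two_ne_zero, div_div_eq_mul_div]
  ring

theorem stmt12 (r a b : ℝ) (hr0 : 0 < r) (hr1 : r ≤ 1) (ha : 0 < a) (hab : a ≤ b) :
    (if r = 1 then a / b
      else r ^ ((b - a) / 2) * (1 - r ^ a) / (1 - r ^ b)) ≤ a / b := by
  split_ifs with hr
  · exact le_rfl
  · rw [rpow_mul_one_sub_rpow_div_one_sub_rpow hr0]
    have hlog : log r < 0 := log_neg hr0 (hr1.lt_of_ne hr)
    exact sinh_mul_div_sinh_mul_le ha hab (by linarith)
end

section
/- Let a ≥ c ≥ d ≥ b > 0 be reals with c + d ≥ a + b, and let 0 < r ≤ 1. Then r^{(c+d-a-b)/2}·(1-r^a)(1-r^b)/((1-r^c)(1-r^d)) ≤ b/(c+d-a), with the left side interpreted as its limit ab/(cd) when r = 1. -/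
/-!
Put `s = -log r / 2 > 0`. Since `1 - r ^ x = 2 r ^ (x / 2) sinh (s x)`, the powers of `r` cancel
and the left side equals `sinh (s a) sinh (s b) / (sinh (s c) sinh (s d))`. With `e = c + d - a`,
so that `b ≤ e` and `a + e = c + d`, two facts about `sinh` finish the proof:
`sinh (s a) sinh (s e) ≤ sinh (s c) sinh (s d)`, because
`2 sinh x sinh y = cosh (x + y) - cosh (x - y)` and `|c - d| ≤ a - e`; and
`sinh (s b) / b ≤ sinh (s e) / e`, because `sinh` is convex on `[0, ∞)` and vanishes at `0`.
-/

open Real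

lemma Real.convexOn_sinh_Ici : ConvexOn ℝ (Set.Ici 0) sinh := by
  refine MonotoneOn.convexOn_of_deriv (convex_Ici 0) continuous_sinh.continuousOn
    differentiable_sinh.differentiableOn ?_
  rw [deriv_sinh, interior_Ici]
  exact cosh_strictMonoOn.monotoneOn.mono Set.Ioi_subset_Ici_self

lemma Real.sinh_mul_le_sinh_mul {x y : ℝ} (hx : 0 < x) (hxy : x ≤ y) :
    sinh x * y ≤ sinh y * x := by
  have hy : 0 < y := hx.trans_le hxy
  have hslope := convexOn_sinh_Ici.secant_mono Set.self_mem_Ici hx.le hy.le hx.ne' hy.ne' hxy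
  simp only [sinh_zero, sub_zero] at hslope
  rwa [div_le_div_iff₀ hx hy] at hslope

lemma Real.sinh_mul_sinh_le_sinh_mul_sinh {x y u v : ℝ} (hsum : x + y = u + v)
    (hdiff : |u - v| ≤ |x - y|) : sinh x * sinh y ≤ sinh u * sinh v := by
  have product (p q : ℝ) : sinh p * sinh q = (cosh (p + q) - cosh (p - q)) / 2 := by
    rw [cosh_add, cosh_sub]; ring
  rw [product, product, hsum]
  linarith [cosh_le_cosh.2 hdiff]

lemma Real.one_sub_rpow_eq {r : ℝ} (hr : 0 < r) (x : ℝ) :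
    1 - r ^ x = 2 * r ^ (x / 2) * sinh (-log r / 2 * x) := by
  rw [sinh_eq, rpow_def_of_pos hr, rpow_def_of_pos hr]
  have h1 : exp (log r * (x / 2)) * exp (-log r / 2 * x) = 1 := by
    rw [← exp_add]; ring_nf; exact exp_zero
  have h2 : exp (log r * (x / 2)) * exp (-(-log r / 2 * x)) = exp (log r * x) := by
    rw [← exp_add]; ring_nf
  linear_combination h2 - h1

lemma rpow_mul_one_sub_rpow_div_eq_sinh {r : ℝ} (hr : 0 < r) (a b c d : ℝ) :
    r ^ ((c + d - a - b) / 2) * (1 - r ^ a) * (1 - r ^ b) / ((1 - r ^ c) * (1 - r ^ d))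
      = sinh (-log r / 2 * a) * sinh (-log r / 2 * b)
          / (sinh (-log r / 2 * c) * sinh (-log r / 2 * d)) := by
  have hpow :
      r ^ ((c + d - a - b) / 2) * r ^ (a / 2) * r ^ (b / 2) = r ^ (c / 2) * r ^ (d / 2) := by
    rw [← rpow_add hr, ← rpow_add hr, ← rpow_add hr]; ring_nf
  simp only [one_sub_rpow_eq hr]
  calc _ = (4 * (r ^ ((c + d - a - b) / 2) * r ^ (a / 2) * r ^ (b / 2)))
          * (sinh (-log r / 2 * a) * sinh (-log r / 2 * b))
          / ((4 * (r ^ (c / 2) * r ^ (d / 2)))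
            * (sinh (-log r / 2 * c) * sinh (-log r / 2 * d))) := by ring
    _ = _ := by rw [hpow, mul_div_mul_left _ _ (by positivity)]

lemma mul_div_mul_le_div_add_sub {a b c d : ℝ} (hb : 0 < b) (hca : c ≤ a) (hda : d ≤ a)
    (hsum : a + b ≤ c + d) : a * b / (c * d) ≤ b / (c + d - a) := by
  have hc : 0 < c := by linarith
  have hd : 0 < d := by linarith
  rw [div_le_div_iff₀ (by positivity) (by linarith)]
  nlinarith [mul_nonneg hb.le (mul_nonneg (sub_nonneg.2 hca) (sub_nonneg.2 hda))]

lemma Real.sinh_mul_sinh_div_le {a b c d : ℝ} (hb : 0 < b) (hca : c ≤ a) (hda : d ≤ a)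
    (hsum : a + b ≤ c + d) : sinh a * sinh b / (sinh c * sinh d) ≤ b / (c + d - a) := by
  set e := c + d - a
  have he : 0 < e := by linarith
  have hpair : sinh a * sinh e ≤ sinh c * sinh d :=
    sinh_mul_sinh_le_sinh_mul_sinh (by ring)
      ((abs_le.2 ⟨by linarith, by linarith⟩).trans (le_abs_self _))
  have hscale : sinh b * e ≤ sinh e * b := sinh_mul_le_sinh_mul hb (by linarith)
  have hsinh_a : 0 < sinh a := sinh_pos_iff.2 (by linarith)
  have hsinh_cd : 0 < sinh c * sinh d :=
    mul_pos (sinh_pos_iff.2 (by linarith)) (sinh_pos_iff.2 (by linarith))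
  rw [div_le_div_iff₀ hsinh_cd he]
  calc sinh a * sinh b * e = sinh a * (sinh b * e) := by ring
    _ ≤ sinh a * (sinh e * b) := by gcongr
    _ = sinh a * sinh e * b := by ring
    _ ≤ b * (sinh c * sinh d) := by rw [mul_comm b]; gcongr

theorem stmt13_general (a b c d r : ℝ) (hb : 0 < b) (hcd : d ≤ c) (hac : c ≤ a)
    (hsum : a + b ≤ c + d) (hr0 : 0 < r) (hr1 : r ≤ 1) :
    (if r = 1 then a * b / (c * d)
      else r ^ ((c + d - a - b) / 2) * (1 - r ^ a) * (1 - r ^ b)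
            / ((1 - r ^ c) * (1 - r ^ d)))
      ≤ b / (c + d - a) := by
  have hda : d ≤ a := hcd.trans hac
  split_ifs with hr
  · exact mul_div_mul_le_div_add_sub hb hac hda hsum
  rw [rpow_mul_one_sub_rpow_div_eq_sinh hr0]
  have hs : 0 < -log r / 2 := by linarith [log_neg hr0 (hr1.lt_of_ne hr)]
  set s := -log r / 2
  calc _ ≤ s * b / (s * c + s * d - s * a) :=
        sinh_mul_sinh_div_le (by positivity) (by gcongr) (by gcongr) (by nlinarith)
    _ = b / (c + d - a) := by rw [← mul_add, ← mul_sub, mul_div_mul_left _ _ hs.ne']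

theorem stmt13 (a b c d r : ℝ) (hb : 0 < b) (hdb : b ≤ d) (hcd : d ≤ c) (hac : c ≤ a)
    (hsum : a + b ≤ c + d) (hr0 : 0 < r) (hr1 : r ≤ 1) :
    (if r = 1 then a * b / (c * d)
      else r ^ ((c + d - a - b) / 2) * (1 - r ^ a) * (1 - r ^ b)
            / ((1 - r ^ c) * (1 - r ^ d)))
      ≤ b / (c + d - a) :=
  stmt13_general a b c d r hb hcd hac hsum hr0 hr1
end

section
/- Let a, b ∈ ℤ⁺ with b ≥ 2, let r ∈ [0,1], and let θ ∈ ℝ. Then Σ_{m=a}^{a+b-1} r^{m-a} sin²(mθ/2) ≥ (1/2)·((1-r^b)/(1-r))·(1 - √((1-2r^b cos(bθ)+r^{2b})/((1-2r cos θ + r²))·((1-r)²/(1-r^b)²))) in the Cauchy–Schwarz form: Σ_{m=a}^{a+b-1} r^{m-a} sin²(mθ/2) ≥ (1/2)·((1-r^b)/(1-r) - √((1-2r^b cos bθ + r^{2b})/(1-2r cos θ + r²))), where at r = 1 or at cos θ = 1 the expressions are interpreted as limits. -/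
/-!
Since `sin² (x / 2) = (1 - cos x) / 2`, the sum equals half the geometric sum `∑ r ^ k` minus
half of `∑ r ^ k cos ((a + k) θ) = Re (e^{i a θ} ∑ z ^ k)` with `z = r e^{i θ}`. That real part is
at most `‖∑_{k < b} z ^ k‖ = |z ^ b - 1| / |z - 1|`, and `|z - 1|² = 1 - 2 r cos θ + r²`,
`|z ^ b - 1|² = 1 - 2 r ^ b cos (b θ) + r ^ {2b}`. When `|z - 1| = 0` we have `z = 1` and the norm
of the sum is `b`, which is the limit value in the statement.
-/

open Real Finset

namespace Complex

lemma normSq_ofReal_mul_exp_mul_I_sub_one (s t : ℝ) :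
    normSq (s * exp (t * I) - 1) = 1 - 2 * s * Real.cos t + s ^ 2 := by
  rw [exp_mul_I]
  simp only [normSq_apply, sub_re, mul_re, ofReal_re, add_re, cos_ofReal_re, sin_ofReal_re, I_re,
    mul_zero, sin_ofReal_im, I_im, mul_one, sub_self, add_zero, ofReal_im, add_im, cos_ofReal_im,
    mul_im, zero_add, zero_mul, sub_zero, one_re, sub_im, one_im]
  linear_combination s ^ 2 * Real.sin_sq_add_cos_sq t

lemma ofReal_mul_exp_mul_I_pow (r θ : ℝ) (n : ℕ) :
    ((r : ℂ) * exp (θ * I)) ^ n = ((r ^ n : ℝ) : ℂ) * exp ((n * θ : ℝ) * I) := by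
  rw [mul_pow, ← exp_nat_mul]
  push_cast
  ring_nf

lemma norm_geom_sum_ofReal_mul_exp_mul_I (r θ : ℝ) (n : ℕ) :
    ‖∑ k ∈ range n, ((r : ℂ) * exp (θ * I)) ^ k‖
      = if 1 - 2 * r * Real.cos θ + r ^ 2 = 0 then (n : ℝ)
        else √((1 - 2 * r ^ n * Real.cos (n * θ) + r ^ (2 * n))
          / (1 - 2 * r * Real.cos θ + r ^ 2)) := by
  set z : ℂ := r * exp (θ * I)
  have hD : normSq (z - 1) = 1 - 2 * r * Real.cos θ + r ^ 2 :=
    normSq_ofReal_mul_exp_mul_I_sub_one r θ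
  have hN : normSq (z ^ n - 1) = 1 - 2 * r ^ n * Real.cos (n * θ) + r ^ (2 * n) := by
    rw [ofReal_mul_exp_mul_I_pow, normSq_ofReal_mul_exp_mul_I_sub_one, pow_mul']
  split_ifs with h
  · have hz : z = 1 := sub_eq_zero.mp (normSq_eq_zero.mp (hD.trans h))
    simp [hz]
  · have hz : z ≠ 1 := fun hz => h (by rw [← hD, hz, sub_self, map_zero])
    rw [geom_sum_eq hz, norm_div, norm_def, norm_def, hD, hN,
      Real.sqrt_div (hN ▸ normSq_nonneg _)]

lemma sum_pow_mul_cos_le_norm_geom_sum (r θ φ : ℝ) (n : ℕ) :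
    ∑ k ∈ range n, r ^ k * Real.cos (φ + k * θ)
      ≤ ‖∑ k ∈ range n, ((r : ℂ) * exp (θ * I)) ^ k‖ := by
  have hre : ∑ k ∈ range n, r ^ k * Real.cos (φ + k * θ)
      = (exp (φ * I) * ∑ k ∈ range n, ((r : ℂ) * exp (θ * I)) ^ k).re := by
    rw [mul_sum, re_sum]
    refine sum_congr rfl fun k _ => ?_
    rw [ofReal_mul_exp_mul_I_pow, mul_left_comm, ← exp_add, ← add_mul, ← ofReal_add,
      re_ofReal_mul, exp_ofReal_mul_I_re]
  calc _ = _ := hre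
    _ ≤ _ := re_le_norm _
    _ = _ := by rw [norm_mul, norm_exp_ofReal_mul_I, one_mul]

end Complex

lemma ite_eq_geom_sum (r : ℝ) (n : ℕ) :
    (if r = 1 then (n : ℝ) else (1 - r ^ n) / (1 - r)) = ∑ k ∈ range n, r ^ k := by
  split_ifs with h
  · simp [h]
  · rw [range_eq_Ico, geom_sum_Ico' h (Nat.zero_le n), pow_zero]

lemma sum_Ico_pow_mul_sin_sq (a n : ℕ) (r θ : ℝ) :
    ∑ m ∈ Ico a (a + n), r ^ (m - a) * sin (m * θ / 2) ^ 2
      = (∑ k ∈ range n, r ^ k) / 2 - (∑ k ∈ range n, r ^ k * cos (a * θ + k * θ)) / 2 := by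
  rw [sum_Ico_eq_sum_range, add_tsub_cancel_left, sum_div, sum_div, ← sum_sub_distrib]
  refine sum_congr rfl fun k _ => ?_
  rw [add_tsub_cancel_left, sin_sq_eq_half_sub]
  push_cast
  ring_nf

theorem stmt14_general (a b : ℕ) (hb : 2 ≤ b) (r θ : ℝ) :
    ∑ m ∈ Finset.Icc a (a + b - 1), r ^ (m - a) * Real.sin (m * θ / 2) ^ 2
      ≥ (1 / 2) *
        ((if r = 1 then (b : ℝ) else (1 - r ^ b) / (1 - r))
          - (if 1 - 2 * r * Real.cos θ + r ^ 2 = 0 then (b : ℝ)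
             else Real.sqrt ((1 - 2 * r ^ b * Real.cos (b * θ) + r ^ (2 * b))
                    / (1 - 2 * r * Real.cos θ + r ^ 2)))) := by
  have hIcc : Icc a (a + b - 1) = Ico a (a + b) := by
    rw [← Ico_add_one_right_eq_Icc, Nat.sub_add_cancel (by omega)]
  rw [hIcc, sum_Ico_pow_mul_sin_sq, ite_eq_geom_sum,
    ← Complex.norm_geom_sum_ofReal_mul_exp_mul_I]
  linarith [Complex.sum_pow_mul_cos_le_norm_geom_sum r θ (a * θ) b]

theorem stmt14 (a b : ℕ) (ha : 1 ≤ a) (hb : 2 ≤ b) (r θ : ℝ) (hr0 : 0 ≤ r) (hr1 : r ≤ 1) :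
    ∑ m ∈ Finset.Icc a (a + b - 1), r ^ (m - a) * Real.sin (m * θ / 2) ^ 2
      ≥ (1 / 2) *
        ((if r = 1 then (b : ℝ) else (1 - r ^ b) / (1 - r))
          - (if 1 - 2 * r * Real.cos θ + r ^ 2 = 0 then (b : ℝ)
             else Real.sqrt ((1 - 2 * r ^ b * Real.cos (b * θ) + r ^ (2 * b))
                    / (1 - 2 * r * Real.cos θ + r ^ 2)))) :=
  stmt14_general a b hb r θ
end

section
/- For every integer n ≥ 1 with n ≡ 1 mod 3 or general n ≥ 1, the saddle point equation Σ_{k=2}^{n-1} k(2r^{2k} + r^k)/(1 + r^k + r^{2k}) = m has a unique positive real solution r for each real m with 0 < m < n² - n - 2; moreover, if n ≤ m ≤ (n² - n - 2)/2, then the solution satisfies e^{-√(α/n)} < r ≤ 1, where α = 2/√3. -/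
/-!
Writing `w x = (2x² + x)/(1 + x + x²)`, the left-hand side is `f r = ∑ k w(r^k)`. Since `w` is
increasing on `[0, ∞)`, `f` is a continuous increasing bijection of `[0, ∞)` onto
`[0, n² - n - 2)`, which gives the unique solution. For the bounds it suffices to compare `f` at
the endpoints: `f 1 = (n² - n - 2)/2 ≥ m`, and with `x = e^{-t}`, `t = √(α/n)`, the estimate
`w x ≤ α x` gives `f x ≤ α ∑ k x^k ≤ α x/(1 - x)² < α/t² = n ≤ m`, the strict step being
`t < 2 sinh (t/2)`.
-/

open Real Finset

noncomputable def saddleWeight (x : ℝ) : ℝ := (2 * x ^ 2 + x) / (1 + x + x ^ 2)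

lemma one_add_add_sq_pos (x : ℝ) : 0 < 1 + x + x ^ 2 := by
  nlinarith [sq_nonneg (x + 1), sq_nonneg x]

lemma saddleWeight_zero : saddleWeight 0 = 0 := by norm_num [saddleWeight]

lemma saddleWeight_one : saddleWeight 1 = 1 := by norm_num [saddleWeight]

lemma continuous_saddleWeight : Continuous saddleWeight :=
  Continuous.div (by fun_prop) (by fun_prop) fun x => (one_add_add_sq_pos x).ne'

lemma strictMonoOn_saddleWeight : StrictMonoOn saddleWeight (Set.Ici 0) := by
  intro x (hx : 0 ≤ x) y _ hxy
  rw [saddleWeight, saddleWeight, div_lt_div_iff₀ (one_add_add_sq_pos x) (one_add_add_sq_pos y)]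
  nlinarith [mul_pos (sub_pos.2 hxy) (show 0 < 2 * x + 2 * y + x * y + 1 by nlinarith)]

lemma two_sub_three_div_le_saddleWeight {x : ℝ} (hx : 0 < x) : 2 - 3 / x ≤ saddleWeight x := by
  have hx' := one_add_add_sq_pos x
  have h : saddleWeight x - (2 - 3 / x) = (2 * x ^ 2 + x + 3) / (x * (1 + x + x ^ 2)) := by
    rw [saddleWeight]; field_simp; ring
  have : 0 ≤ saddleWeight x - (2 - 3 / x) := by rw [h]; positivity
  linarith

-- `2/√3` is the maximum of `(2y + 1)/(1 + y + y²)`, attained at `y = (√3 - 1)/2`.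
lemma two_mul_add_one_le (y : ℝ) : 2 * y + 1 ≤ 2 / √3 * (1 + y + y ^ 2) := by
  have hs : √3 ^ 2 = 3 := sq_sqrt (by norm_num)
  rw [div_mul_eq_mul_div, le_div_iff₀ (by positivity)]
  nlinarith [sq_nonneg (2 * y - (√3 - 1))]

lemma saddleWeight_le_mul {x : ℝ} (hx : 0 ≤ x) : saddleWeight x ≤ 2 / √3 * x := by
  rw [saddleWeight, div_le_iff₀ (one_add_add_sq_pos x)]
  nlinarith [mul_le_mul_of_nonneg_left (two_mul_add_one_le x) hx]

lemma sq_mul_exp_neg_lt {t : ℝ} (ht : 0 < t) : t ^ 2 * exp (-t) < (1 - exp (-t)) ^ 2 := by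
  have hsinh : t / 2 < sinh (t / 2) := self_lt_sinh_iff.2 (by positivity)
  have hsq : exp (-(t / 2)) ^ 2 = exp (-t) := by rw [← exp_nat_mul]; ring_nf
  have hinv : exp (t / 2) * exp (-(t / 2)) = 1 := by rw [← exp_add]; simp
  have hfactor : 1 - exp (-t) = 2 * sinh (t / 2) * exp (-(t / 2)) := by
    rw [sinh_eq]; linear_combination hsq - hinv
  have : (t / 2) ^ 2 < sinh (t / 2) ^ 2 := pow_lt_pow_left₀ hsinh (by positivity) two_ne_zero
  rw [hfactor, mul_pow, mul_pow, hsq]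
  nlinarith [exp_pos (-t)]

lemma sum_natCast_mul_pow_le {x : ℝ} (hx0 : 0 ≤ x) (hx1 : x < 1) (s : Finset ℕ) :
    ∑ k ∈ s, (k : ℝ) * x ^ k ≤ x / (1 - x) ^ 2 := by
  have hx : ‖x‖ < 1 := by rwa [norm_of_nonneg hx0]
  rw [← tsum_coe_mul_geometric_of_norm_lt_one hx]
  exact (hasSum_coe_mul_geometric_of_norm_lt_one hx).summable.sum_le_tsum s
    fun k _ => by positivity

lemma sum_Icc_two_natCast {n : ℕ} (hn : 2 ≤ n) :
    ∑ k ∈ Icc 2 (n - 1), (k : ℝ) = ((n : ℝ) ^ 2 - n - 2) / 2 := by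
  induction n, hn using Nat.le_induction with
  | base => norm_num
  | succ n hn ih =>
    obtain ⟨p, rfl⟩ : ∃ p, n = p + 1 := ⟨n - 1, by omega⟩
    simp only [Nat.add_sub_cancel] at ih ⊢
    rw [sum_Icc_succ_top (by omega), ih]
    push_cast
    ring

lemma existsUnique_pos_eq_of_strictMonoOn {f : ℝ → ℝ} (hf : StrictMonoOn f (Set.Ici 0))
    (hc : ContinuousOn f (Set.Ici 0)) (h0 : f 0 = 0) {m R : ℝ} (hm : 0 < m) (hR0 : 0 ≤ R)
    (hR : m ≤ f R) : ∃! r, 0 < r ∧ f r = m := by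
  obtain ⟨r, hr, hrm⟩ :=
    intermediate_value_Icc hR0 (hc.mono Set.Icc_subset_Ici_self) ⟨by rw [h0]; exact hm.le, hR⟩
  have hr0 : r ≠ 0 := by rintro rfl; exact hm.ne' (h0 ▸ hrm).symm
  refine ⟨r, ⟨lt_of_le_of_ne hr.1 (Ne.symm hr0), hrm⟩, fun s ⟨hs, hsm⟩ => ?_⟩
  exact hf.injOn (Set.mem_Ici.2 hs.le) (Set.mem_Ici.2 hr.1) (hsm.trans hrm.symm)

noncomputable def saddleSum (n : ℕ) (r : ℝ) : ℝ :=
  ∑ k ∈ Icc 2 (n - 1), (k : ℝ) * saddleWeight (r ^ k)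

lemma saddleSum_eq (n : ℕ) (r : ℝ) :
    saddleSum n r = ∑ k ∈ Icc 2 (n - 1),
      (k : ℝ) * (2 * r ^ (2 * k) + r ^ k) / (1 + r ^ k + r ^ (2 * k)) := by
  refine sum_congr rfl fun k _ => ?_
  rw [saddleWeight, mul_div_assoc, pow_mul', sq]

lemma saddleSum_zero (n : ℕ) : saddleSum n 0 = 0 :=
  sum_eq_zero fun k hk => by
    rw [zero_pow (by have := (mem_Icc.1 hk).1; omega), saddleWeight_zero, mul_zero]

lemma saddleSum_one {n : ℕ} (hn : 2 ≤ n) : saddleSum n 1 = ((n : ℝ) ^ 2 - n - 2) / 2 := by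
  simp only [saddleSum, one_pow, saddleWeight_one, mul_one, sum_Icc_two_natCast hn]

lemma continuous_saddleSum (n : ℕ) : Continuous (saddleSum n) :=
  continuous_finsetSum _ fun _ _ =>
    continuous_const.mul (continuous_saddleWeight.comp (by fun_prop))

lemma strictMonoOn_saddleSum {n : ℕ} (hn : 3 ≤ n) : StrictMonoOn (saddleSum n) (Set.Ici 0) := by
  intro a (ha : 0 ≤ a) b _ hab
  refine sum_lt_sum_of_nonempty (nonempty_Icc.2 (by omega)) fun k hk => ?_
  have hk : k ≠ 0 := by have := (mem_Icc.1 hk).1; omega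
  refine mul_lt_mul_of_pos_left ?_ (by positivity)
  exact strictMonoOn_saddleWeight (pow_nonneg ha k) (pow_nonneg (ha.trans hab.le) k)
    (pow_lt_pow_left₀ hab ha hk)

lemma exists_lt_saddleSum {n : ℕ} (hn : 3 ≤ n) {m : ℝ} (hm : m < (n : ℝ) ^ 2 - n - 2) :
    ∃ R, 0 ≤ R ∧ m < saddleSum n R := by
  set D : ℝ := (n : ℝ) ^ 2 - n - 2
  have hD : 0 < D := by
    have : (3 : ℝ) ≤ n := by exact_mod_cast hn
    nlinarith
  set R := max 1 (3 * D / (D - m))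
  have hR1 : 1 ≤ R := le_max_left _ _
  have hR0 : 0 < R := one_pos.trans_le hR1
  have hR : 3 * D / R ≤ D - m := by
    rw [div_le_iff₀ hR0, mul_comm (D - m)]
    exact (div_le_iff₀ (sub_pos.2 hm)).1 (le_max_right _ _)
  have hterm : ∀ k ∈ Icc 2 (n - 1), (k : ℝ) * (2 - 3 / R) ≤ k * saddleWeight (R ^ k) := by
    intro k hk
    have hk : k ≠ 0 := by have := (mem_Icc.1 hk).1; omega
    refine mul_le_mul_of_nonneg_left ?_ (by positivity)
    calc 2 - 3 / R ≤ 2 - 3 / R ^ k := by gcongr; exact le_self_pow₀ hR1 hk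
      _ ≤ saddleWeight (R ^ k) := two_sub_three_div_le_saddleWeight (by positivity)
  have hsum := sum_le_sum hterm
  rw [← sum_mul, sum_Icc_two_natCast (by omega)] at hsum
  refine ⟨R, hR0.le, lt_of_lt_of_le ?_ hsum⟩
  have : D / 2 * (2 - 3 / R) = D - 3 * D / R / 2 := by ring
  linarith

lemma saddleSum_exp_lt {n : ℕ} (hn : 0 < n) : saddleSum n (exp (-√(2 / √3 / n))) < n := by
  set α := 2 / √3
  set t := √(α / n)
  have hα : 0 < α := by positivity
  have ht : 0 < t := sqrt_pos.2 (by positivity)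
  have ht2 : t ^ 2 = α / n := sq_sqrt (by positivity)
  set x := exp (-t)
  have hx0 : 0 < x := exp_pos _
  have hx1 : x < 1 := exp_lt_one_iff.2 (neg_neg_of_pos ht)
  calc saddleSum n x ≤ ∑ k ∈ Icc 2 (n - 1), (k : ℝ) * (α * x ^ k) :=
        sum_le_sum fun k _ =>
          mul_le_mul_of_nonneg_left (saddleWeight_le_mul (by positivity)) (by positivity)
    _ = α * ∑ k ∈ Icc 2 (n - 1), (k : ℝ) * x ^ k := by
        rw [mul_sum]; exact sum_congr rfl fun k _ => mul_left_comm _ _ _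
    _ ≤ α * (x / (1 - x) ^ 2) := by gcongr; exact sum_natCast_mul_pow_le hx0.le hx1 _
    _ < α * (1 / t ^ 2) := by
        refine mul_lt_mul_of_pos_left ?_ hα
        rw [div_lt_div_iff₀ (pow_pos (sub_pos.2 hx1) 2) (by positivity)]
        linarith [sq_mul_exp_neg_lt ht]
    _ = n := by rw [ht2]; field_simp

theorem stmt18_general (n : ℕ) (m : ℝ)
    (hm0 : 0 < m) (hm1 : m < (n : ℝ) ^ 2 - n - 2) :
    (∃! r : ℝ, 0 < r ∧
        ∑ k ∈ Finset.Icc 2 (n - 1),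
            (k : ℝ) * (2 * r ^ (2 * k) + r ^ k) / (1 + r ^ k + r ^ (2 * k)) = m)
    ∧ ((n : ℝ) ≤ m → m ≤ ((n : ℝ) ^ 2 - n - 2) / 2 →
        ∀ r : ℝ, 0 < r →
          (∑ k ∈ Finset.Icc 2 (n - 1),
              (k : ℝ) * (2 * r ^ (2 * k) + r ^ k) / (1 + r ^ k + r ^ (2 * k)) = m) →
          Real.exp (-Real.sqrt ((2 / Real.sqrt 3) / n)) < r ∧ r ≤ 1) := by
  have hn : 3 ≤ n := by
    have : (2 : ℝ) < n := by nlinarith [n.cast_nonneg (α := ℝ)]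
    exact_mod_cast this
  simp only [← saddleSum_eq]
  have hmono := strictMonoOn_saddleSum hn
  refine ⟨?_, fun hnm hmD r hr hrm => ⟨?_, ?_⟩⟩
  · obtain ⟨R, hR0, hmR⟩ := exists_lt_saddleSum hn hm1
    exact existsUnique_pos_eq_of_strictMonoOn hmono (continuous_saddleSum n).continuousOn
      (saddleSum_zero n) hm0 hR0 hmR.le
  · refine (hmono.lt_iff_lt (Set.mem_Ici.2 (exp_pos _).le) (Set.mem_Ici.2 hr.le)).1 ?_
    exact (saddleSum_exp_lt (by omega)).trans_le (hrm ▸ hnm)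
  · refine (hmono.le_iff_le (Set.mem_Ici.2 hr.le) (Set.mem_Ici.2 zero_le_one)).1 ?_
    rw [hrm, saddleSum_one (by omega)]
    exact hmD

theorem stmt18 (n : ℕ) (hn : 1 ≤ n) (m : ℝ)
    (hm0 : 0 < m) (hm1 : m < (n : ℝ) ^ 2 - n - 2) :
    (∃! r : ℝ, 0 < r ∧
        ∑ k ∈ Finset.Icc 2 (n - 1),
            (k : ℝ) * (2 * r ^ (2 * k) + r ^ k) / (1 + r ^ k + r ^ (2 * k)) = m)
    ∧ ((n : ℝ) ≤ m → m ≤ ((n : ℝ) ^ 2 - n - 2) / 2 →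
        ∀ r : ℝ, 0 < r →
          (∑ k ∈ Finset.Icc 2 (n - 1),
              (k : ℝ) * (2 * r ^ (2 * k) + r ^ k) / (1 + r ^ k + r ^ (2 * k)) = m) →
          Real.exp (-Real.sqrt ((2 / Real.sqrt 3) / n)) < r ∧ r ≤ 1) :=
  stmt18_general n m hm0 hm1
end

section
/- Let n ≥ 6924 be an integer, α = 2/√3, and r ∈ (exp(-√(α/n)), 1]. Then (1 - r^{n/12})(1 - r^{(n-12)/24}) / ((1-r)(1-r^n)) ≥ 24, where at r = 1 the left side is interpreted as its limit (n/12)·((n-12)/24)/n = (n-12)/288. -/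
/-!
Write `r = exp (-t)`. The hypothesis forces `t < √(α / n) ≤ 1 / 72`, and on that range the
elementary bounds `u / (1 + u) ≤ 1 - exp (-u) ≤ 2u / (2 + u)` (the upper one is the Padé bound
`tanh (u / 2) ≤ u / 2`) together with `1 - exp (-t) ≤ t` reduce the claim to a polynomial
inequality in `n` and `t`. At `t = 0` it reads `2 (n - 12) ≥ 13824`, i.e. exactly `n ≥ 6924`;
the first-order terms are absorbed using `t ≤ 1 / 72`.
-/

open Real

theorem one_sub_exp_neg_le_two_mul_div {u : ℝ} (hu : 0 ≤ u) :
    1 - exp (-u) ≤ 2 * u / (2 + u) := by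
  rcases le_or_gt 2 u with h2 | h2
  · rw [le_div_iff₀ (by linarith)]
    nlinarith [exp_pos (-u)]
  · have hinv : (2 - u) / (2 + u) ≤ exp (-u) := by
      rw [exp_neg, ← inv_div]
      exact inv_anti₀ (exp_pos u) (exp_le_two_add_div_two_sub hu h2)
    have : 1 - (2 - u) / (2 + u) = 2 * u / (2 + u) := by
      field_simp
      ring
    linarith

theorem div_one_add_le_one_sub_exp_neg {u : ℝ} (hu : 0 ≤ u) : u / (1 + u) ≤ 1 - exp (-u) := by
  have hinv : exp (-u) ≤ (1 + u)⁻¹ := by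
    rw [exp_neg]
    exact inv_anti₀ (by linarith) (by linarith [add_one_le_exp u])
  have : u / (1 + u) = 1 - (1 + u)⁻¹ := by
    field_simp
    ring
  linarith

theorem twenty_four_mul_two_mul_div_le_div_one_add_mul_div_one_add {N t : ℝ} (hN : 6924 ≤ N)
    (ht0 : 0 < t) (ht : t ≤ 1 / 72) :
    24 * (t * (2 * (t * N) / (2 + t * N))) ≤
      t * (N / 12) / (1 + t * (N / 12)) * (t * ((N - 12) / 24) / (1 + t * ((N - 12) / 24))) := by
  have hN0 : 0 < N := by linarith
  have hy : 0 < 1 + t * (N / 12) := by positivity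
  have hz : 0 < 1 + t * ((N - 12) / 24) := by nlinarith
  have hpoly :
      13824 * (1 + t * (N / 12)) * (1 + t * ((N - 12) / 24)) ≤ (N - 12) * (2 + t * N) := by
    have hN' := sub_nonneg.2 hN
    have ht' := mul_nonneg ht0.le (sub_nonneg.2 ht)
    nlinarith [mul_nonneg (mul_nonneg ht0.le ht0.le) hN', mul_nonneg ht0.le hN', mul_nonneg ht' hN',
      mul_nonneg ht' (mul_nonneg hN' hN')]
  rw [div_mul_div_comm, mul_div_assoc', mul_div_assoc',
    div_le_div_iff₀ (by positivity) (mul_pos hy hz)]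
  nlinarith [mul_le_mul_of_nonneg_left hpoly (by positivity : 0 ≤ t ^ 2 * N / 288)]

theorem twenty_four_mul_one_sub_exp_neg_le {N t : ℝ} (hN : 6924 ≤ N) (ht0 : 0 < t)
    (ht : t ≤ 1 / 72) :
    24 * ((1 - exp (-t)) * (1 - exp (-(t * N)))) ≤
      (1 - exp (-(t * (N / 12)))) * (1 - exp (-(t * ((N - 12) / 24)))) := by
  have hx : 0 ≤ t * N := by nlinarith
  have hy : 0 ≤ t * (N / 12) := by nlinarith
  have hz : 0 ≤ t * ((N - 12) / 24) := by nlinarith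
  have hupper : (1 - exp (-t)) * (1 - exp (-(t * N))) ≤ t * (2 * (t * N) / (2 + t * N)) :=
    mul_le_mul (by linarith [one_sub_le_exp_neg t]) (one_sub_exp_neg_le_two_mul_div hx)
      (by linarith [exp_le_one_iff.2 (neg_nonpos.2 hx)]) ht0.le
  have hlower := mul_le_mul (div_one_add_le_one_sub_exp_neg hy) (div_one_add_le_one_sub_exp_neg hz)
    (by positivity) (by linarith [exp_le_one_iff.2 (neg_nonpos.2 hy)])
  linarith [twenty_four_mul_two_mul_div_le_div_one_add_mul_div_one_add hN ht0 ht]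

theorem twenty_four_mul_one_sub_rpow_le {N r : ℝ} (hN : 6924 ≤ N) (hr0 : exp (-(1 / 72)) ≤ r)
    (hr1 : r < 1) :
    24 * ((1 - r) * (1 - r ^ N)) ≤ (1 - r ^ (N / 12)) * (1 - r ^ ((N - 12) / 24)) := by
  obtain ⟨t, rfl⟩ : ∃ t, r = exp (-t) :=
    ⟨-log r, by rw [neg_neg, exp_log ((exp_pos _).trans_le hr0)]⟩
  rw [exp_le_exp, neg_le_neg_iff] at hr0
  rw [exp_lt_one_iff, neg_lt_zero] at hr1
  simp only [← exp_mul, neg_mul]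
  exact twenty_four_mul_one_sub_exp_neg_le hN hr1 hr0

theorem sqrt_two_div_sqrt_three_div_le {N : ℝ} (hN : 6924 ≤ N) :
    √((2 / √3) / N) ≤ 1 / 72 := by
  have hsqrt3 : 3 / 2 ≤ √3 := le_sqrt_of_sq_le (by norm_num)
  have hα : 2 / √3 ≤ 4 / 3 := by
    rw [div_le_iff₀ (by positivity)]
    linarith
  rw [sqrt_le_left (by norm_num), div_le_iff₀ (by linarith)]
  nlinarith

theorem stmt19 (n : ℕ) (hn : 6924 ≤ n) (r : ℝ)
    (hr0 : Real.exp (-Real.sqrt ((2 / Real.sqrt 3) / n)) < r) (hr1 : r ≤ 1) :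
    (if r = 1 then ((n : ℝ) - 12) / 288
      else (1 - r ^ ((n : ℝ) / 12)) * (1 - r ^ (((n : ℝ) - 12) / 24))
            / ((1 - r) * (1 - r ^ (n : ℝ))))
      ≥ 24 := by
  have hN : (6924 : ℝ) ≤ n := by exact_mod_cast hn
  rcases hr1.eq_or_lt with rfl | hr1
  · rw [if_pos rfl, ge_iff_le, le_div_iff₀ (by norm_num)]
    linarith
  · have hr : exp (-(1 / 72)) ≤ r :=
      (exp_le_exp.2 (neg_le_neg (sqrt_two_div_sqrt_three_div_le hN))).trans hr0.le
    have hden : 0 < (1 - r) * (1 - r ^ (n : ℝ)) :=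
      mul_pos (by linarith) (sub_pos.2 (rpow_lt_one ((exp_pos _).trans_le hr).le hr1 (by linarith)))
    rw [if_neg hr1.ne, ge_iff_le, le_div_iff₀ hden]
    exact twenty_four_mul_one_sub_rpow_le hN hr hr1
end
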